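/- arXiv:2302.11099 — 9 statements merged into one kernel-verified Lean document; each statement's English description precedes it below -/
import Mathlib

section
/- For every integer n ≥ 4 and every tree T with n vertices, HA(T) ≥ 4(1 - 1/n)², with equality if and only if T is the star S_n. -/
open Finset
open scoped Classical

/-- The harmonic-arithmetic index: sum over edges of `4 d_u d_v / (d_u + d_v)^2`. -/
noncomputable def HA {V : Type*} [Fintype V] (G : SimpleGraph V) : ℝ :=
  ∑ e ∈ G.edgeFinset,
    Sym2.lift ⟨fun u v => 4 * (G.degree u : ℝ) * G.degree v / ((G.degree u : ℝ) + G.degree v) ^ 2,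
      fun u v => by ring_nf⟩ e

/-- `edgeCnt G s t` is `m_{s,t}`: the number of edges whose endpoint degrees are `{s, t}`. -/
noncomputable def edgeCnt {V : Type*} [Fintype V] (G : SimpleGraph V) (s t : ℕ) : ℕ :=
  (G.edgeFinset.filter fun e =>
    Sym2.lift ⟨fun u v => (G.degree u = s ∧ G.degree v = t) ∨ (G.degree u = t ∧ G.degree v = s),
      fun u v => propext (by tauto)⟩ e).card

/-- `degCnt G t` is `n_t`: the number of vertices of degree `t`. -/
noncomputable def degCnt {V : Type*} [Fintype V] (G : SimpleGraph V) (t : ℕ) : ℕ :=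
  (Finset.univ.filter fun v => G.degree v = t).card

/-- The star graph on `n` vertices, with center `0`. -/
def starGraph (n : ℕ) : SimpleGraph (Fin n) := SimpleGraph.fromRel (fun i _ => i.val = 0)

lemma key_ineq (N a b : ℝ) (hN : 4 ≤ N) (ha1 : 1 ≤ a) (hb1 : 1 ≤ b)
    (ha : a ≤ N - 1) (hb : b ≤ N - 1) :
    4*(N-1)/N^2 ≤ 4*a*b/(a+b)^2 ∧
    (4*a*b/(a+b)^2 = 4*(N-1)/N^2 ↔ (a = 1 ∧ b = N-1) ∨ (a = N-1 ∧ b = 1)) := by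
  have hN0 : (0:ℝ) < N := by linarith
  have hab : (0:ℝ) < a + b := by linarith
  have hden : (0:ℝ) < N^2*(a+b)^2 := by positivity
  have hid : 4*a*b/(a+b)^2 - 4*(N-1)/N^2 = 4*((N-1)*a - b)*((N-1)*b - a)/(N^2*(a+b)^2) := by
    field_simp
    ring
  have h1 : 0 ≤ (N-1)*a - b := by nlinarith
  have h2 : 0 ≤ (N-1)*b - a := by nlinarith
  have hnum : 0 ≤ 4*((N-1)*a - b)*((N-1)*b - a) :=
    mul_nonneg (mul_nonneg (by norm_num) h1) h2
  have hdiff : 0 ≤ 4*a*b/(a+b)^2 - 4*(N-1)/N^2 := by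
    rw [hid]; exact div_nonneg hnum hden.le
  refine ⟨by linarith, ?_⟩
  constructor
  · intro heq
    have hz : 4*((N-1)*a - b)*((N-1)*b - a)/(N^2*(a+b)^2) = 0 := by
      rw [← hid]; linarith
    have hz2 : ((N-1)*a - b)*((N-1)*b - a) = 0 := by
      have := (div_eq_zero_iff.1 hz).resolve_right (by positivity)
      nlinarith [this]
    rcases mul_eq_zero.1 hz2 with h | h
    · left
      have hbv : b = N - 1 := by nlinarith
      have hav : a = 1 := by nlinarith
      exact ⟨hav, hbv⟩
    · right
      have hbv : b = 1 := by nlinarith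
      have hav : a = N - 1 := by nlinarith
      exact ⟨hav, hbv⟩
  · rintro (⟨rfl, rfl⟩ | ⟨rfl, rfl⟩) <;> field_simp <;> ring

lemma star_degrees {V : Type*} [Fintype V] {T : SimpleGraph V} {n : ℕ} (hn : 4 ≤ n)
    (hcard : Fintype.card V = n) (c : V)
    (hstar : ∀ u v, T.Adj u v ↔ u ≠ v ∧ (u = c ∨ v = c)) :
    T.degree c = n - 1 ∧ ∀ v, v ≠ c → T.degree v = 1 := by
  constructor
  · have h : T.neighborFinset c = Finset.univ.erase c := by
      ext v
      rw [SimpleGraph.mem_neighborFinset, hstar]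
      simp only [Finset.mem_erase, Finset.mem_univ, and_true]
      constructor
      · rintro ⟨h1, _⟩; exact fun h => h1 h.symm
      · intro h; exact ⟨fun h' => h h'.symm, by tauto⟩
    rw [← SimpleGraph.card_neighborFinset_eq_degree, h,
      Finset.card_erase_of_mem (Finset.mem_univ c), Finset.card_univ, hcard]
  · intro v hv
    have h : T.neighborFinset v = {c} := by
      ext w
      simp only [SimpleGraph.mem_neighborFinset, hstar, Finset.mem_singleton]
      constructor
      · rintro ⟨h1, h2 | h2⟩
        · exact absurd h2 hv
        · exact h2
      · rintro rfl; exact ⟨hv, Or.inr rfl⟩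
    rw [← SimpleGraph.card_neighborFinset_eq_degree, h, Finset.card_singleton]

lemma HA_of_star {V : Type*} [Fintype V] {T : SimpleGraph V} {n : ℕ} (hn : 4 ≤ n)
    (hcard : Fintype.card V = n) (hT : T.IsTree) (c : V)
    (hstar : ∀ u v, T.Adj u v ↔ u ≠ v ∧ (u = c ∨ v = c)) :
    HA T = 4 * (1 - 1 / (n : ℝ)) ^ 2 := by
  obtain ⟨hdegc, hdegv⟩ := star_degrees hn hcard c hstar
  have hcastn : ((n - 1 : ℕ) : ℝ) = (n : ℝ) - 1 := by
    rw [Nat.cast_sub (by omega)]; norm_num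
  have hn0 : (n : ℝ) ≠ 0 := by positivity
  have hterm : ∀ e ∈ T.edgeFinset,
      Sym2.lift ⟨fun u v => 4 * (T.degree u : ℝ) * T.degree v /
        ((T.degree u : ℝ) + T.degree v) ^ 2, fun u v => by ring_nf⟩ e
      = 4 * ((n : ℝ) - 1) / (n : ℝ) ^ 2 := by
    intro e he
    induction e using Sym2.ind with
    | _ u v =>
      have hadj : T.Adj u v := by rwa [SimpleGraph.mem_edgeFinset, SimpleGraph.mem_edgeSet] at he
      rw [Sym2.lift_mk]
      dsimp only
      obtain ⟨hne, rfl | rfl⟩ := (hstar u v).1 hadj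
      · rw [hdegc, hdegv v (Ne.symm hne), hcastn]
        have h : (n : ℝ) - 1 + 1 = (n : ℝ) := by ring
        push_cast
        rw [h]
        ring
      · rw [hdegc, hdegv u hne, hcastn]
        have h : (1 : ℝ) + ((n : ℝ) - 1) = (n : ℝ) := by ring
        push_cast
        rw [h]
        ring
  have hedges : T.edgeFinset.card = n - 1 := by
    have := hT.card_edgeFinset
    omega
  rw [HA, Finset.sum_congr rfl hterm, Finset.sum_const, hedges, nsmul_eq_mul, hcastn]
  field_simp

/-- For `n ≥ 4`, every tree on `n` vertices satisfies `HA(T) ≥ 4(1 - 1/n)²`,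
with equality iff `T` is the star `S_n`. -/
theorem HA_tree_ge (n : ℕ) (hn : 4 ≤ n) {V : Type*} [Fintype V] (T : SimpleGraph V)
    (hT : T.IsTree) (hcard : Fintype.card V = n) :
    HA T ≥ 4 * (1 - 1 / (n : ℝ)) ^ 2 ∧
    (HA T = 4 * (1 - 1 / (n : ℝ)) ^ 2 ↔ Nonempty (T ≃g starGraph n)) := by
  classical
  have hn0 : 0 < n := by omega
  have hnR : (4 : ℝ) ≤ (n : ℝ) := by exact_mod_cast hn
  have hnne : (n : ℝ) ≠ 0 := by positivity
  have hcastn : ((n - 1 : ℕ) : ℝ) = (n : ℝ) - 1 := by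
    rw [Nat.cast_sub (by omega)]; norm_num
  have hedges : T.edgeFinset.card = n - 1 := by
    have := hT.card_edgeFinset; omega
  -- degree bounds
  have hdegub : ∀ v : V, T.degree v ≤ n - 1 := by
    intro v
    have := T.degree_lt_card_verts v
    omega
  have hdeglb : ∀ {u v : V}, T.Adj u v → 1 ≤ T.degree u := by
    intro u v h
    exact (T.degree_pos_iff_exists_adj u).2 ⟨v, h⟩
  have hdegR : ∀ {u v : V}, T.Adj u v →
      1 ≤ (T.degree u : ℝ) ∧ (T.degree u : ℝ) ≤ (n : ℝ) - 1 := by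
    intro u v h
    constructor
    · exact_mod_cast hdeglb h
    · rw [← hcastn]; exact_mod_cast hdegub u
  -- the per-edge function
  set f : Sym2 V → ℝ := Sym2.lift ⟨fun u v => 4 * (T.degree u : ℝ) * T.degree v /
      ((T.degree u : ℝ) + T.degree v) ^ 2, fun u v => by ring_nf⟩ with hf
  have hHA : HA T = ∑ e ∈ T.edgeFinset, f e := rfl
  set C : ℝ := 4 * ((n : ℝ) - 1) / (n : ℝ) ^ 2 with hCdef
  have hRHS : 4 * (1 - 1 / (n : ℝ)) ^ 2 = (n - 1 : ℕ) * C := by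
    rw [hcastn, hCdef]; field_simp
  -- per-edge lower bound
  have hge : ∀ e ∈ T.edgeFinset, C ≤ f e := by
    intro e he
    induction e using Sym2.ind with
    | _ u v =>
      have hadj : T.Adj u v := by rwa [SimpleGraph.mem_edgeFinset, SimpleGraph.mem_edgeSet] at he
      obtain ⟨h1, h2⟩ := hdegR hadj
      obtain ⟨h3, h4⟩ := hdegR hadj.symm
      have := (key_ineq (n : ℝ) (T.degree u) (T.degree v) hnR h1 h3 h2 h4).1
      rw [hf, Sym2.lift_mk]
      exact this
  have hsum : (n - 1 : ℕ) * C ≤ HA T := by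
    rw [hHA]
    calc ((n - 1 : ℕ) : ℝ) * C = ∑ _e ∈ T.edgeFinset, C := by
          rw [Finset.sum_const, hedges, nsmul_eq_mul]
      _ ≤ ∑ e ∈ T.edgeFinset, f e := Finset.sum_le_sum hge
  refine ⟨by rw [hRHS]; exact hsum, ?_, ?_⟩
  · -- equality → star
    intro heq
    have hall : ∀ e ∈ T.edgeFinset, C = f e := by
      rw [← Finset.sum_eq_sum_iff_of_le hge]
      rw [Finset.sum_const, hedges, nsmul_eq_mul, ← hHA, heq, hRHS]
    -- every edge has degrees {1, n-1}
    have hdeg : ∀ u v : V, T.Adj u v →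
        (T.degree u = 1 ∧ T.degree v = n - 1) ∨ (T.degree u = n - 1 ∧ T.degree v = 1) := by
      intro u v hadj
      have he : s(u, v) ∈ T.edgeFinset := by
        rwa [SimpleGraph.mem_edgeFinset, SimpleGraph.mem_edgeSet]
      have hfe := (hall _ he).symm
      rw [hf, Sym2.lift_mk] at hfe
      obtain ⟨h1, h2⟩ := hdegR hadj
      obtain ⟨h3, h4⟩ := hdegR hadj.symm
      have := ((key_ineq (n : ℝ) (T.degree u) (T.degree v) hnR h1 h3 h2 h4).2).1 hfe
      rcases this with ⟨hu, hv⟩ | ⟨hu, hv⟩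
      · left
        constructor
        · exact_mod_cast hu
        · have : (T.degree v : ℝ) = ((n - 1 : ℕ) : ℝ) := by rw [hcastn]; exact hv
          exact_mod_cast this
      · right
        constructor
        · have : (T.degree u : ℝ) = ((n - 1 : ℕ) : ℝ) := by rw [hcastn]; exact hu
          exact_mod_cast this
        · exact_mod_cast hv
    -- find the center
    have hne : T.edgeFinset.Nonempty := by
      rw [← Finset.card_pos, hedges]; omega
    obtain ⟨e0, he0⟩ := hne
    obtain ⟨c, hc⟩ : ∃ c : V, T.degree c = n - 1 := by
      induction e0 using Sym2.ind with
      | _ u v =>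
        have hadj : T.Adj u v := by
          rwa [SimpleGraph.mem_edgeFinset, SimpleGraph.mem_edgeSet] at he0
        rcases hdeg u v hadj with ⟨_, hv⟩ | ⟨hu, _⟩
        · exact ⟨v, hv⟩
        · exact ⟨u, hu⟩
    -- c is adjacent to everything else
    have hadjall : ∀ v : V, v ≠ c → T.Adj c v := by
      intro v hv
      have hsub : T.neighborFinset c ⊆ Finset.univ.erase c := by
        intro w hw
        rw [SimpleGraph.mem_neighborFinset] at hw
        exact Finset.mem_erase.2 ⟨fun h => T.loopless.irrefl c (h ▸ hw), Finset.mem_univ w⟩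
      have hcards : (Finset.univ.erase c).card ≤ (T.neighborFinset c).card := by
        rw [SimpleGraph.card_neighborFinset_eq_degree, hc,
          Finset.card_erase_of_mem (Finset.mem_univ c), Finset.card_univ, hcard]
      have := Finset.eq_of_subset_of_card_le hsub hcards
      have hv' : v ∈ T.neighborFinset c := by
        rw [this]; exact Finset.mem_erase.2 ⟨hv, Finset.mem_univ v⟩
      exact (SimpleGraph.mem_neighborFinset _ _ _).1 hv'
    have hleaf : ∀ v : V, v ≠ c → T.degree v = 1 := by
      intro v hv
      rcases hdeg c v (hadjall v hv) with ⟨hc1, _⟩ | ⟨_, hv1⟩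
      · omega
      · exact hv1
    have hstar : ∀ u v, T.Adj u v ↔ u ≠ v ∧ (u = c ∨ v = c) := by
      intro u v
      constructor
      · intro h
        refine ⟨h.ne, ?_⟩
        by_contra hcon
        push_neg at hcon
        obtain ⟨huc, hvc⟩ := hcon
        -- u has at least two neighbors: c and v
        have hsub : ({c, v} : Finset V) ⊆ T.neighborFinset u := by
          intro w hw
          rw [SimpleGraph.mem_neighborFinset]
          rcases Finset.mem_insert.1 hw with rfl | hw
          · exact (hadjall u huc).symm
          · rw [Finset.mem_singleton] at hw; subst hw; exact h
        have h2 : ({c, v} : Finset V).card = 2 := by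
          rw [Finset.card_insert_of_notMem (by simp [hvc, Ne.symm]), Finset.card_singleton]
        have := Finset.card_le_card hsub
        rw [h2, SimpleGraph.card_neighborFinset_eq_degree, hleaf u huc] at this
        omega
      · rintro ⟨hne', rfl | rfl⟩
        · exact hadjall v (fun h => hne' h.symm)
        · exact (hadjall u hne').symm
    -- build the isomorphism
    let g : V ≃ Fin n := Fintype.equivFinOfCardEq hcard
    let e : V ≃ Fin n := g.trans (Equiv.swap (g c) ⟨0, hn0⟩)
    have hec : e c = ⟨0, hn0⟩ := by simp [e]
    refine ⟨⟨e, ?_⟩⟩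
    intro u v
    have hinj : Function.Injective e := e.injective
    simp only [starGraph, SimpleGraph.fromRel_adj, hstar, Equiv.coe_fn_mk]
    constructor
    · rintro ⟨hne', h0 | h0⟩
      · refine ⟨fun h => hne' (congrArg e h), Or.inl ?_⟩
        have : e u = ⟨0, hn0⟩ := Fin.ext h0
        exact hinj (this.trans hec.symm)
      · refine ⟨fun h => hne' (congrArg e h), Or.inr ?_⟩
        have : e v = ⟨0, hn0⟩ := Fin.ext h0
        exact hinj (this.trans hec.symm)
    · rintro ⟨hne', rfl | rfl⟩
      · exact ⟨fun h => hne' (hinj h), Or.inl (by rw [hec])⟩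
      · exact ⟨fun h => hne' (hinj h), Or.inr (by rw [hec])⟩
  · -- star → equality
    rintro ⟨iso⟩
    set c : V := iso.symm ⟨0, hn0⟩ with hc
    have hstar : ∀ u v, T.Adj u v ↔ u ≠ v ∧ (u = c ∨ v = c) := by
      intro u v
      rw [← iso.map_adj_iff]
      simp only [starGraph, SimpleGraph.fromRel_adj]
      have hiz : ∀ w : V, (iso w : Fin n).val = 0 ↔ w = c := by
        intro w
        constructor
        · intro h
          have : iso w = ⟨0, hn0⟩ := Fin.ext h
          rw [hc, ← this]; exact (iso.toEquiv.symm_apply_apply w).symm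
        · rintro rfl
          rw [hc]
          simp
      constructor
      · rintro ⟨hne', h0 | h0⟩
        · exact ⟨fun h => hne' (congrArg iso h), Or.inl ((hiz u).1 h0)⟩
        · exact ⟨fun h => hne' (congrArg iso h), Or.inr ((hiz v).1 h0)⟩
      · rintro ⟨hne', h0 | h0⟩
        · exact ⟨fun h => hne' (iso.injective h), Or.inl ((hiz u).2 h0)⟩
        · exact ⟨fun h => hne' (iso.injective h), Or.inr ((hiz v).2 h0)⟩
    exact HA_of_star hn hcard hT c hstar
end

section
/- For every integer n ≥ 4 and every tree T with n vertices, HA(T) ≤ n - 11/9, with equality if and only if T is the path P_n. -/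
open Finset
open scoped Classical

set_option linter.unusedSectionVars false
set_option linter.unusedVariables false

namespace HAaux
open SimpleGraph Walk


variable {V : Type*} [Fintype V] {T : SimpleGraph V}

lemma uniq_nbr {u w y : V} (hu : T.degree u = 1) (h1 : T.Adj u w) (h2 : T.Adj u y) : w = y := by
  have hc : (T.neighborFinset u).card ≤ 1 := by
    rw [T.card_neighborFinset_eq_degree, hu]
  exact Finset.card_le_one.mp hc w (by simpa using h1) y (by simpa using h2)

lemma stay {u w : V} (hu : T.degree u = 1) (hw : T.degree w = 1) (huw : T.Adj u w) :
    ∀ {a b : V} (_ : T.Walk a b), a = u ∨ a = w → b = u ∨ b = w := by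
  intro a b q
  induction q with
  | nil => exact fun h => h
  | cons h q ih =>
    rintro (rfl | rfl)
    · exact ih (Or.inr (uniq_nbr hu huw h).symm)
    · exact ih (Or.inl (uniq_nbr hw huw.symm h).symm)

lemma deg_pos (hc : T.Connected) (h2 : 2 ≤ Fintype.card V) (v : V) : 1 ≤ T.degree v := by
  obtain ⟨x, hx⟩ := Fintype.exists_ne_of_one_lt_card (by omega) v
  obtain ⟨q⟩ := hc v x
  cases q with
  | nil => exact absurd rfl (Ne.symm hx)
  | cons h _ => exact Nat.one_le_iff_ne_zero.mpr (by
      rw [← T.card_neighborFinset_eq_degree]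
      exact Finset.card_ne_zero_of_mem (by simpa using h))

lemma leaf_nbr (hc : T.Connected) (h3 : 3 ≤ Fintype.card V) {u w : V}
    (h : T.Adj u w) (hu : T.degree u = 1) : 2 ≤ T.degree w := by
  have h1 : 1 ≤ T.degree w := deg_pos hc (by omega) w
  rcases Nat.lt_or_ge (T.degree w) 2 with hlt | hge
  · exfalso
    have hw : T.degree w = 1 := by omega
    have : ∀ v : V, v = u ∨ v = w := by
      intro v
      obtain ⟨q⟩ := hc u v
      exact stay hu hw h q (Or.inl rfl)
    have hsub : (Finset.univ : Finset V) ⊆ {u, w} := fun v _ => by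
      rcases this v with rfl | rfl <;> simp
    have := Finset.card_le_card hsub
    simp only [Finset.card_univ] at this
    have : Fintype.card V ≤ 2 := this.trans ((Finset.card_insert_le _ _).trans (by simp))
    omega
  · exact hge




lemma pair_deg {v s t : V} (h1 : T.Adj v s) (h2 : T.Adj v t) (hst : s ≠ t) : 2 ≤ T.degree v := by
  rw [← T.card_neighborFinset_eq_degree]
  have hsub : ({s, t} : Finset V) ⊆ T.neighborFinset v := by
    intro x hx; simp at hx; rcases hx with rfl | rfl <;> simpa
  calc 2 = ({s, t} : Finset V).card := (Finset.card_pair hst).symm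
    _ ≤ _ := Finset.card_le_card hsub

lemma triple_deg {v s t x : V} (h1 : T.Adj v s) (h2 : T.Adj v t) (h3 : T.Adj v x)
    (hst : s ≠ t) (hxs : x ≠ s) (hxt : x ≠ t) : 3 ≤ T.degree v := by
  rw [← T.card_neighborFinset_eq_degree]
  have hsub : ({x, s, t} : Finset V) ⊆ T.neighborFinset v := by
    intro y hy; simp at hy; rcases hy with rfl | rfl | rfl <;> simpa
  have : ({x, s, t} : Finset V).card = 3 := by
    rw [Finset.card_insert_of_notMem (by simp [hxs, hxt]), Finset.card_pair hst]
  calc 3 = ({x, s, t} : Finset V).card := this.symm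
    _ ≤ _ := Finset.card_le_card hsub

lemma cross {S : Set V} : ∀ {a b : V} (_ : T.Walk a b), a ∉ S → b ∈ S →
    ∃ x w, T.Adj x w ∧ x ∉ S ∧ w ∈ S := by
  intro a b q
  induction q with
  | nil => intro ha hb; exact absurd hb ha
  | @cons a c b h q ih =>
    intro ha hb
    by_cases hc : c ∈ S
    · exact ⟨a, c, h, ha, hc⟩
    · exact ih hc hb

lemma getVert_inj : ∀ {a b : V} (p : T.Walk a b), p.IsPath →
    ∀ i j, i ≤ p.length → j ≤ p.length → p.getVert i = p.getVert j → i = j := by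
  intro a b p
  induction p with
  | nil => intro _ i j hi hj _; simp at hi hj; omega
  | @cons a c b h q ih =>
    intro hp i j hi hj heq
    obtain ⟨hq, haq⟩ := (Walk.cons_isPath_iff h q).mp hp
    match i, j with
    | 0, 0 => rfl
    | 0, j+1 =>
      exfalso
      apply haq
      rw [Walk.mem_support_iff_exists_getVert]
      refine ⟨j, ?_, by simpa using hj⟩
      rw [show q.getVert j = (Walk.cons h q).getVert (j+1) from rfl, ← heq]; rfl
    | i+1, 0 =>
      exfalso
      apply haq
      rw [Walk.mem_support_iff_exists_getVert]
      refine ⟨i, ?_, by simpa using hi⟩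
      rw [show q.getVert i = (Walk.cons h q).getVert (i+1) from rfl, heq]; rfl
    | i+1, j+1 =>
      have := ih hq i j (by simpa using hi) (by simpa using hj) heq
      omega

lemma mem_edges : ∀ {a b : V} (p : T.Walk a b) (e : Sym2 V),
    e ∈ p.edges ↔ ∃ k, k < p.length ∧ e = s(p.getVert k, p.getVert (k+1)) := by
  intro a b p
  induction p with
  | nil => intro e; simp
  | @cons a c b h q ih =>
    intro e
    rw [Walk.edges_cons, List.mem_cons, ih]
    constructor
    · rintro (rfl | ⟨k, hk, rfl⟩)
      · exact ⟨0, by simp, by rw [show (q.cons h).getVert 0 = a from rfl,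
          Walk.getVert_cons_succ, Walk.getVert_zero]⟩
      · exact ⟨k + 1, by simp; omega, by rw [Walk.getVert_cons_succ, Walk.getVert_cons_succ]⟩
    · rintro ⟨k, hk, rfl⟩
      match k with
      | 0 => exact Or.inl (by rw [show (q.cons h).getVert 0 = a from rfl,
          Walk.getVert_cons_succ, Walk.getVert_zero])
      | k+1 =>
        right
        exact ⟨k, by simp at hk; omega, by rw [Walk.getVert_cons_succ, Walk.getVert_cons_succ]⟩

lemma two_nbrs : ∀ {a b : V} (p : T.Walk a b), p.IsPath → ∀ {w}, w ∈ p.support → w ≠ a → w ≠ b →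
    ∃ s t, s ≠ t ∧ T.Adj w s ∧ T.Adj w t ∧ s ∈ p.support ∧ t ∈ p.support := by
  intro a b p
  induction p with
  | nil => intro _ w hw hwa _; simp at hw; exact absurd hw hwa
  | @cons a c b h q ih =>
    intro hp w hw hwa hwb
    obtain ⟨hq, haq⟩ := (Walk.cons_isPath_iff h q).mp hp
    have hwq : w ∈ q.support := by
      rcases (Walk.mem_support_iff _).mp hw with rfl | h'
      · exact absurd rfl hwa
      · exact h'
    by_cases hwc : w = c
    · subst hwc
      have hlen : 0 < q.length := by
        cases q with
        | nil => exact absurd rfl hwb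
        | cons _ _ => simp
      refine ⟨a, q.getVert 1, ?_, h.symm, ?_, (q.cons h).start_mem_support, ?_⟩
      · intro heq
        apply haq
        rw [heq, Walk.mem_support_iff_exists_getVert]
        exact ⟨1, rfl, hlen⟩
      · have := q.adj_getVert_succ hlen
        rwa [Walk.getVert_zero] at this
      · rw [Walk.support_cons]
        exact List.mem_cons_of_mem _ ((Walk.mem_support_iff_exists_getVert).mpr ⟨1, rfl, hlen⟩)
    · obtain ⟨s, t, hst, h1, h2, hs, ht⟩ := ih hq hwq hwc hwb
      exact ⟨s, t, hst, h1, h2, by simp [Walk.support_cons, hs], by simp [Walk.support_cons, ht]⟩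

lemma endpoint_two {a b x : V} (p : T.Walk a b) (hab : a ≠ b) (hx : x ∉ p.support)
    (hxa : T.Adj x a) : 2 ≤ T.degree a := by
  have hlen : 0 < p.length := by
    cases p with
    | nil => exact absurd rfl hab
    | cons _ _ => simp
  have h1 : T.Adj a (p.getVert 1) := by
    have := p.adj_getVert_succ hlen
    rwa [Walk.getVert_zero] at this
  refine pair_deg h1 hxa.symm ?_
  intro heq
  apply hx
  rw [← heq, Walk.mem_support_iff_exists_getVert]
  exact ⟨1, rfl, hlen⟩

lemma ham (hc : T.Connected) {a b : V} (hab : a ≠ b)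
    (ha : T.degree a = 1) (hb : T.degree b = 1)
    (hdeg : ∀ v, v ≠ a → v ≠ b → T.degree v = 2)
    (p : T.Walk a b) (hp : p.IsPath) : ∀ v, v ∈ p.support := by
  by_contra hcon
  push_neg at hcon
  obtain ⟨v, hv⟩ := hcon
  obtain ⟨q⟩ := hc v a
  obtain ⟨x, w, hxw, hx, hw⟩ := cross (S := {y | y ∈ p.support}) q hv p.start_mem_support
  simp only [Set.mem_setOf_eq] at hx hw
  by_cases hwa : w = a
  · subst hwa
    have := endpoint_two p hab hx hxw
    omega
  by_cases hwb : w = b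
  · subst hwb
    have := endpoint_two p.reverse hab.symm (by rwa [Walk.support_reverse, List.mem_reverse]) hxw
    omega
  · obtain ⟨s, t, hst, h1, h2, hs, ht⟩ := two_nbrs p hp hw hwa hwb
    have := triple_deg h1 h2 hxw.symm hst (fun h => hx (h ▸ hs)) (fun h => hx (h ▸ ht))
    have := hdeg w hwa hwb
    omega





noncomputable def Fterm (T : SimpleGraph V) : Sym2 V → ℝ :=
  Sym2.lift ⟨fun u v => 4 * (T.degree u : ℝ) * T.degree v / ((T.degree u : ℝ) + T.degree v) ^ 2,
      fun u v => by ring_nf⟩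

lemma Fterm_mk (u v : V) :
    Fterm T s(u, v) = 4 * (T.degree u : ℝ) * T.degree v / ((T.degree u : ℝ) + T.degree v) ^ 2 :=
  rfl

lemma F_le (hc : T.Connected) (h3 : 3 ≤ Fintype.card V) {e : Sym2 V} (he : e ∈ T.edgeFinset) :
    Fterm T e ≤ if ∃ v ∈ e, T.degree v = 1 then (8 / 9 : ℝ) else 1 := by
  rw [SimpleGraph.mem_edgeFinset] at he
  induction e using Sym2.inductionOn with
  | hf u v =>
    have hadj : T.Adj u v := he
    have hu1 : 1 ≤ T.degree u := deg_pos hc (by omega) u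
    have hv1 : 1 ≤ T.degree v := deg_pos hc (by omega) v
    rw [Fterm_mk]
    by_cases hp : ∃ w ∈ s(u, v), T.degree w = 1
    · rw [if_pos hp]
      obtain ⟨w, hw, hw1⟩ := hp
      rw [Sym2.mem_iff] at hw
      rcases hw with rfl | rfl
      · have h2 : (2 : ℝ) ≤ (T.degree v : ℝ) := by
          exact_mod_cast leaf_nbr hc h3 hadj hw1
        rw [hw1]
        set x : ℝ := (T.degree v : ℝ)
        have hx : (0 : ℝ) < ((1 : ℕ) + x) ^ 2 := by positivity
        rw [div_le_iff₀ hx]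
        push_cast
        nlinarith [sq_nonneg (x - 2)]
      · have h2 : (2 : ℝ) ≤ (T.degree u : ℝ) := by
          exact_mod_cast leaf_nbr hc h3 hadj.symm hw1
        rw [hw1]
        set x : ℝ := (T.degree u : ℝ)
        have hx : (0 : ℝ) < (x + (1 : ℕ)) ^ 2 := by positivity
        rw [div_le_iff₀ hx]
        push_cast
        nlinarith [sq_nonneg (x - 2)]
    · rw [if_neg hp]
      have hx : (0 : ℝ) < ((T.degree u : ℝ) + T.degree v) ^ 2 := by
        have : (1 : ℝ) ≤ (T.degree u : ℝ) := by exact_mod_cast hu1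
        have : (1 : ℝ) ≤ (T.degree v : ℝ) := by exact_mod_cast hv1
        positivity
      rw [div_le_iff₀ hx]
      nlinarith [sq_nonneg ((T.degree u : ℝ) - T.degree v)]

lemma F_eq (hc : T.Connected) (h3 : 3 ≤ Fintype.card V)
    (hdeg : ∀ v : V, T.degree v = 1 ∨ T.degree v = 2)
    {e : Sym2 V} (he : e ∈ T.edgeFinset) :
    Fterm T e = if ∃ v ∈ e, T.degree v = 1 then (8 / 9 : ℝ) else 1 := by
  rw [SimpleGraph.mem_edgeFinset] at he
  induction e using Sym2.inductionOn with
  | hf u v =>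
    have hadj : T.Adj u v := he
    rw [Fterm_mk]
    by_cases hp : ∃ w ∈ s(u, v), T.degree w = 1
    · rw [if_pos hp]
      obtain ⟨w, hw, hw1⟩ := hp
      rw [Sym2.mem_iff] at hw
      rcases hw with rfl | rfl
      · have h2 : T.degree v = 2 := by
          have := leaf_nbr hc h3 hadj hw1
          rcases hdeg v with h | h <;> omega
        rw [hw1, h2]; norm_num
      · have h2 : T.degree u = 2 := by
          have := leaf_nbr hc h3 hadj.symm hw1
          rcases hdeg u with h | h <;> omega
        rw [hw1, h2]; norm_num
    · push_neg at hp
      have hu2 : T.degree u = 2 := by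
        have := hp u (by simp); rcases hdeg u with h | h <;> tauto
      have hv2 : T.degree v = 2 := by
        have := hp v (by simp); rcases hdeg v with h | h <;> tauto
      have hneg : ¬∃ w ∈ s(u, v), T.degree w = 1 := by
        push_neg
        intro w hw
        rw [Sym2.mem_iff] at hw
        rcases hw with rfl | rfl
        · rw [hu2]; omega
        · rw [hv2]; omega
      rw [if_neg hneg, hu2, hv2]
      norm_num





lemma sum_deg (hT : T.IsTree) :
    ∑ v : V, T.degree v = 2 * (Fintype.card V - 1) := by
  rw [T.sum_degrees_eq_twice_card_edges]
  have := hT.card_edgeFinset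
  omega

lemma two_le_leaves (hT : T.IsTree) (h2 : 2 ≤ Fintype.card V) :
    2 ≤ (Finset.univ.filter fun v => T.degree v = 1).card := by
  set L := Finset.univ.filter fun v => T.degree v = 1 with hL
  have hsplit : ∑ v ∈ L, T.degree v + ∑ v ∈ Lᶜ, T.degree v = ∑ v : V, T.degree v :=
    Finset.sum_add_sum_compl L _
  have h1 : ∑ v ∈ L, T.degree v = L.card := by
    rw [Finset.sum_congr rfl (fun v hv => by simp only [hL, Finset.mem_filter] at hv; exact hv.2)]
    simp
  have h2' : 2 * Lᶜ.card ≤ ∑ v ∈ Lᶜ, T.degree v := by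
    have := Finset.card_nsmul_le_sum Lᶜ (fun v => T.degree v) 2 (fun v hv => by
      simp only [hL, Finset.mem_compl, Finset.mem_filter, Finset.mem_univ, true_and] at hv
      have := deg_pos hT.isConnected h2 v
      show 2 ≤ T.degree v
      omega)
    simpa [smul_eq_mul, mul_comm] using this
  have hcompl : Lᶜ.card = Fintype.card V - L.card := by
    rw [Finset.card_compl]
  have hle : L.card ≤ Fintype.card V :=
    (Finset.card_filter_le _ _).trans (le_of_eq Finset.card_univ)
  have htot := sum_deg hT
  omega

lemma nonleaf_deg_two (hT : T.IsTree) (h2 : 2 ≤ Fintype.card V)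
    (hLcard : (Finset.univ.filter fun v => T.degree v = 1).card = 2) :
    ∀ v : V, T.degree v ≠ 1 → T.degree v = 2 := by
  set L := Finset.univ.filter fun v => T.degree v = 1 with hL
  intro v hv
  by_contra hne
  have hv3 : 3 ≤ T.degree v := by
    have := deg_pos hT.isConnected h2 v
    omega
  have hvC : v ∈ Lᶜ := by simp [hL, hv]
  have h1 : ∑ w ∈ L, T.degree w = L.card := by
    rw [Finset.sum_congr rfl (fun w hw => by simp only [hL, Finset.mem_filter] at hw; exact hw.2)]
    simp
  have hsplit : ∑ w ∈ L, T.degree w + ∑ w ∈ Lᶜ, T.degree w = ∑ w : V, T.degree w :=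
    Finset.sum_add_sum_compl L _
  have herase : T.degree v + ∑ w ∈ Lᶜ.erase v, T.degree w = ∑ w ∈ Lᶜ, T.degree w :=
    Finset.add_sum_erase _ (fun w => T.degree w) hvC
  have h2' : 2 * (Lᶜ.erase v).card ≤ ∑ w ∈ Lᶜ.erase v, T.degree w := by
    have := Finset.card_nsmul_le_sum (Lᶜ.erase v) (fun w => T.degree w) 2 (fun w hw => by
      have hw' := Finset.mem_of_mem_erase hw
      simp only [hL, Finset.mem_compl, Finset.mem_filter, Finset.mem_univ, true_and] at hw'
      have := deg_pos hT.isConnected h2 w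
      show 2 ≤ T.degree w
      omega)
    simpa [smul_eq_mul, mul_comm] using this
  have hcerase : (Lᶜ.erase v).card = Lᶜ.card - 1 := Finset.card_erase_of_mem hvC
  have hcompl : Lᶜ.card = Fintype.card V - L.card := Finset.card_compl L
  have hle : L.card ≤ Fintype.card V :=
    (Finset.card_filter_le _ _).trans (le_of_eq Finset.card_univ)
  have hccard : 1 ≤ Lᶜ.card := Finset.card_pos.mpr ⟨v, hvC⟩
  have htot := sum_deg hT
  omega

lemma leaves_le_pend (hc : T.Connected) (h3 : 3 ≤ Fintype.card V) :
    (Finset.univ.filter fun v => T.degree v = 1).card ≤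
      (T.edgeFinset.filter fun e => ∃ v ∈ e, T.degree v = 1).card := by
  have hex : ∀ u : V, ∃ w, T.Adj u w := by
    intro u
    have h1 := deg_pos hc (by omega) u
    rw [← T.card_neighborFinset_eq_degree] at h1
    obtain ⟨w, hw⟩ := Finset.card_pos.mp h1
    exact ⟨w, (T.mem_neighborFinset u w).mp hw⟩
  choose nb hnb using hex
  apply Finset.card_le_card_of_injOn (fun u => s(u, nb u))
  · intro u hu
    simp only [Finset.mem_coe, Finset.mem_filter, Finset.mem_univ, true_and] at hu
    rw [Finset.mem_coe, Finset.mem_filter]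
    exact ⟨SimpleGraph.mem_edgeFinset.mpr (hnb u), ⟨u, by simp, hu⟩⟩
  · intro u hu u' hu' heq
    simp only [Finset.coe_filter, Set.mem_setOf_eq, Finset.mem_univ, true_and] at hu hu'
    rw [Sym2.eq_iff] at heq
    rcases heq with ⟨h, _⟩ | ⟨h1, h2⟩
    · exact h
    · exfalso
      have hadj : T.Adj u' u := by rw [h1]; exact hnb u'
      have := leaf_nbr hc h3 hadj hu'
      omega

lemma pend_le_leaves (h1 : 1 ≤ Fintype.card V) :
    (T.edgeFinset.filter fun e => ∃ v ∈ e, T.degree v = 1).card ≤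
      (Finset.univ.filter fun v => T.degree v = 1).card := by
  have hne : Nonempty V := Fintype.card_pos_iff.mp (by omega)
  set g : Sym2 V → V := fun e =>
    if h : ∃ v, v ∈ e ∧ T.degree v = 1 then h.choose else hne.some with hg
  apply Finset.card_le_card_of_injOn g
  · intro e he
    simp only [Finset.mem_coe, Finset.mem_filter] at he
    obtain ⟨heE, hp⟩ := he
    have hp' : ∃ v, v ∈ e ∧ T.degree v = 1 := hp
    simp only [hg, dif_pos hp', Finset.mem_filter, Finset.mem_univ, true_and]
    exact Finset.mem_coe.mpr (Finset.mem_filter.mpr ⟨Finset.mem_univ _, hp'.choose_spec.2⟩)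
  · intro e he e' he' heq
    simp only [Finset.mem_coe, Finset.mem_filter] at he he'
    obtain ⟨heE, hp⟩ := he
    obtain ⟨heE', hp'⟩ := he'
    have hp2 : ∃ v, v ∈ e ∧ T.degree v = 1 := hp
    have hp2' : ∃ v, v ∈ e' ∧ T.degree v = 1 := hp'
    simp only [hg, dif_pos hp2, dif_pos hp2'] at heq
    have hue : hp2.choose ∈ e := hp2.choose_spec.1
    have hdu : T.degree hp2.choose = 1 := hp2.choose_spec.2
    have hue' : hp2.choose ∈ e' := heq ▸ hp2'.choose_spec.1
    have hi : e ∈ T.incidenceFinset hp2.choose := by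
      rw [SimpleGraph.mem_incidenceFinset]
      exact ⟨SimpleGraph.mem_edgeFinset.mp heE, hue⟩
    have hi' : e' ∈ T.incidenceFinset hp2.choose := by
      rw [SimpleGraph.mem_incidenceFinset]
      exact ⟨SimpleGraph.mem_edgeFinset.mp heE', hue'⟩
    have hcard : (T.incidenceFinset hp2.choose).card ≤ 1 := by
      rw [T.card_incidenceFinset_eq_degree, hdu]
    exact Finset.card_le_one.mp hcard e hi e' hi'




lemma iso_degree {W : Type*} [Fintype W] {G' : SimpleGraph W} (φ : T ≃g G') (v : V) :
    T.degree v = G'.degree (φ v) := by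
  rw [← SimpleGraph.card_neighborSet_eq_degree, ← SimpleGraph.card_neighborSet_eq_degree]
  exact Fintype.card_congr (φ.mapNeighborSet v)

lemma leaves_transfer {W : Type*} [Fintype W] {G' : SimpleGraph W} (φ : T ≃g G') :
    (Finset.univ.filter fun v => T.degree v = 1).card =
      (Finset.univ.filter fun w => G'.degree w = 1).card := by
  apply Finset.card_bij (fun v _ => φ v)
  · intro v hv
    simp only [Finset.mem_filter, Finset.mem_univ, true_and] at hv ⊢
    rw [← iso_degree φ v]; exact hv
  · intro v _ v' _ h
    exact φ.toEquiv.injective h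
  · intro w hw
    refine ⟨φ.symm w, ?_, by simp⟩
    simp only [Finset.mem_filter, Finset.mem_univ, true_and] at hw ⊢
    rw [iso_degree φ (φ.symm w)]
    have : φ (φ.symm w) = w := φ.toEquiv.apply_symm_apply w
    rw [this]
    exact hw

lemma pathGraph_deg_one_iff {n : ℕ} (hn : 4 ≤ n) (v : Fin n) :
    (SimpleGraph.pathGraph n).degree v = 1 ↔ v.val = 0 ∨ v.val = n - 1 := by
  have hdeg : ∀ w : Fin n, (SimpleGraph.pathGraph n).neighborFinset w =
      (Finset.univ.filter fun j : Fin n => w.val + 1 = j.val) ∪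
      (Finset.univ.filter fun j : Fin n => j.val + 1 = w.val) := by
    intro w
    ext j
    simp only [SimpleGraph.mem_neighborFinset, SimpleGraph.pathGraph_adj, Finset.mem_union,
      Finset.mem_filter, Finset.mem_univ, true_and]
  constructor
  · intro h1
    by_contra hcon
    push_neg at hcon
    obtain ⟨h0, hl⟩ := hcon
    -- interior vertex: degree 2
    have hvlt : v.val < n := v.isLt
    have hmem1 : (⟨v.val + 1, by omega⟩ : Fin n) ∈ (SimpleGraph.pathGraph n).neighborFinset v := by
      rw [SimpleGraph.mem_neighborFinset, SimpleGraph.pathGraph_adj]; left; rfl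
    have hmem2 : (⟨v.val - 1, by omega⟩ : Fin n) ∈ (SimpleGraph.pathGraph n).neighborFinset v := by
      rw [SimpleGraph.mem_neighborFinset, SimpleGraph.pathGraph_adj]; right; simp; omega
    have hne : (⟨v.val + 1, by omega⟩ : Fin n) ≠ (⟨v.val - 1, by omega⟩ : Fin n) := by
      intro h; rw [Fin.ext_iff] at h; simp at h; omega
    have h2 : 2 ≤ (SimpleGraph.pathGraph n).degree v := by
      rw [← SimpleGraph.card_neighborFinset_eq_degree]
      calc 2 = ({(⟨v.val + 1, by omega⟩ : Fin n), (⟨v.val - 1, by omega⟩ : Fin n)} :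
              Finset (Fin n)).card := (Finset.card_pair hne).symm
        _ ≤ _ := Finset.card_le_card (by
              intro x hx; simp only [Finset.mem_insert, Finset.mem_singleton] at hx
              rcases hx with rfl | rfl
              · exact hmem1
              · exact hmem2)
    omega
  · intro h
    rw [← SimpleGraph.card_neighborFinset_eq_degree]
    rcases h with h0 | hl
    · have : (SimpleGraph.pathGraph n).neighborFinset v = {(⟨1, by omega⟩ : Fin n)} := by
        ext j
        simp only [SimpleGraph.mem_neighborFinset, SimpleGraph.pathGraph_adj,
          Finset.mem_singleton, Fin.ext_iff]
        constructor
        · rintro (h | h) <;> omega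
        · intro h; left; omega
      rw [this]; simp
    · have : (SimpleGraph.pathGraph n).neighborFinset v = {(⟨n - 2, by omega⟩ : Fin n)} := by
        ext j
        have := j.isLt
        simp only [SimpleGraph.mem_neighborFinset, SimpleGraph.pathGraph_adj,
          Finset.mem_singleton, Fin.ext_iff]
        constructor
        · rintro (h | h) <;> omega
        · intro h; right; omega
      rw [this]; simp

lemma pathGraph_leaves_card {n : ℕ} (hn : 4 ≤ n) :
    (Finset.univ.filter fun v : Fin n => (SimpleGraph.pathGraph n).degree v = 1).card = 2 := by
  have : (Finset.univ.filter fun v : Fin n => (SimpleGraph.pathGraph n).degree v = 1) =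
      {(⟨0, by omega⟩ : Fin n), (⟨n - 1, by omega⟩ : Fin n)} := by
    ext v
    simp only [Finset.mem_filter, Finset.mem_univ, true_and, Finset.mem_insert,
      Finset.mem_singleton, Fin.ext_iff, pathGraph_deg_one_iff hn]
  rw [this, Finset.card_pair (by intro h; rw [Fin.ext_iff] at h; simp at h; omega)]





lemma iso_of_two_leaves (hT : T.IsTree) {n : ℕ} (hn : 4 ≤ n) (hcard : Fintype.card V = n)
    {a b : V} (hab : a ≠ b) (ha : T.degree a = 1) (hb : T.degree b = 1)
    (hdeg : ∀ v, v ≠ a → v ≠ b → T.degree v = 2) :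
    Nonempty (T ≃g SimpleGraph.pathGraph n) := by
  obtain ⟨p, hp, -⟩ := hT.existsUnique_path a b
  have hham : ∀ v, v ∈ p.support := ham hT.isConnected hab ha hb hdeg p hp
  have hnodup := hp.support_nodup
  have hlensup : p.support.length = n := by
    have h1 : p.support.toFinset = Finset.univ :=
      Finset.eq_univ_of_forall (fun v => List.mem_toFinset.mpr (hham v))
    have h2 : p.support.toFinset.card = p.support.length := List.toFinset_card_of_nodup hnodup
    rw [h1, Finset.card_univ, hcard] at h2
    omega
  have hplen : p.length + 1 = n := by
    rw [← Walk.length_support]; exact hlensup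
  set f : Fin n → V := fun i => p.getVert i.val with hf
  have hinj : Function.Injective f := by
    intro i j h
    exact Fin.ext (getVert_inj p hp i.val j.val (by omega) (by omega) h)
  have hbij : Function.Bijective f :=
    (Fintype.bijective_iff_injective_and_card f).mpr ⟨hinj, by simp [hcard]⟩
  have hedges : p.edges.toFinset = T.edgeFinset := by
    apply Finset.eq_of_subset_of_card_le
    · intro e he
      exact SimpleGraph.mem_edgeFinset.mpr (p.edges_subset_edgeSet (List.mem_toFinset.mp he))
    · have hE : T.edgeFinset.card + 1 = n := by rw [hT.card_edgeFinset, hcard]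
      have hnd : p.edges.Nodup := hp.isTrail.edges_nodup
      have : p.edges.toFinset.card = p.edges.length := List.toFinset_card_of_nodup hnd
      rw [this, Walk.length_edges]
      omega
  have hadj : ∀ i j : Fin n, T.Adj (f i) (f j) ↔ (SimpleGraph.pathGraph n).Adj i j := by
    intro i j
    constructor
    · intro h
      have he : s(f i, f j) ∈ p.edges := by
        rw [← List.mem_toFinset, hedges]
        exact SimpleGraph.mem_edgeFinset.mpr h
      obtain ⟨k, hk, heq⟩ := (mem_edges p _).mp he
      rw [Sym2.eq_iff] at heq
      rw [SimpleGraph.pathGraph_adj]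
      rcases heq with ⟨h1, h2⟩ | ⟨h1, h2⟩
      · have hi := getVert_inj p hp i.val k (by omega) (by omega) h1
        have hj := getVert_inj p hp j.val (k+1) (by omega) (by omega) h2
        left; omega
      · have hi := getVert_inj p hp i.val (k+1) (by omega) (by omega) h1
        have hj := getVert_inj p hp j.val k (by omega) (by omega) h2
        right; omega
    · intro h
      rw [SimpleGraph.pathGraph_adj] at h
      have hi := i.isLt
      have hj := j.isLt
      rcases h with h | h
      · have hk : i.val < p.length := by omega
        have := p.adj_getVert_succ hk
        rw [hf]
        simpa [h] using this
      · have hk : j.val < p.length := by omega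
        have := p.adj_getVert_succ hk
        rw [hf]
        exact (by simpa [h] using this : T.Adj (p.getVert j.val) (p.getVert i.val)).symm
  exact ⟨(SimpleGraph.Iso.symm ⟨Equiv.ofBijective f hbij, fun {i j} => hadj i j⟩ :
    T ≃g SimpleGraph.pathGraph n)⟩


end HAaux

/-- For `n ≥ 4`, every tree on `n` vertices satisfies `HA(T) ≤ n - 11/9`,
with equality iff `T` is the path `P_n`. -/
theorem HA_tree_le (n : ℕ) (hn : 4 ≤ n) {V : Type*} [Fintype V] (T : SimpleGraph V)
    (hT : T.IsTree) (hcard : Fintype.card V = n) :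
    HA T ≤ (n : ℝ) - 11 / 9 ∧
    (HA T = (n : ℝ) - 11 / 9 ↔ Nonempty (T ≃g SimpleGraph.pathGraph n)) := by
  classical
  have hconn := hT.isConnected
  have h2 : 2 ≤ Fintype.card V := by omega
  have h3 : 3 ≤ Fintype.card V := by omega
  have hE : T.edgeFinset.card + 1 = n := by rw [hT.card_edgeFinset, hcard]
  set E := T.edgeFinset with hEdef
  set pend : Sym2 V → Prop := fun e => ∃ v ∈ e, T.degree v = 1 with hpend
  set P := E.filter pend with hPdef
  set L := Finset.univ.filter fun v => T.degree v = 1 with hLdef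
  have hL2 : 2 ≤ L.card := HAaux.two_le_leaves hT h2
  have hLP : L.card ≤ P.card := HAaux.leaves_le_pend hconn h3
  have hPL : P.card ≤ L.card := HAaux.pend_le_leaves (by omega)
  have hm2 : 2 ≤ P.card := le_trans hL2 hLP
  have hmE : P.card ≤ E.card := Finset.card_filter_le _ _
  have hHA : HA T = ∑ e ∈ E, HAaux.Fterm T e := rfl
  have hsplit : ∑ e ∈ E, HAaux.Fterm T e =
      ∑ e ∈ P, HAaux.Fterm T e + ∑ e ∈ E.filter (fun e => ¬ pend e), HAaux.Fterm T e :=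
    (Finset.sum_filter_add_sum_filter_not E pend _).symm
  have hcardnot : (E.filter (fun e => ¬ pend e)).card = E.card - P.card := by
    have := Finset.card_filter_add_card_filter_not (s := E) (p := pend)
    rw [hPdef]
    omega
  have hEcast : (E.card : ℝ) = (n : ℝ) - 1 := by
    have : ((E.card + 1 : ℕ) : ℝ) = (n : ℝ) := by exact_mod_cast hE
    push_cast at this
    linarith
  -- the main upper bound in terms of P.card
  have hbound : HA T ≤ (n : ℝ) - 1 - (P.card : ℝ) / 9 := by
    have h_p : ∑ e ∈ P, HAaux.Fterm T e ≤ (P.card : ℝ) * (8 / 9) := by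
      have := Finset.sum_le_card_nsmul P (HAaux.Fterm T) (8 / 9) (fun e he => by
        rw [hPdef, Finset.mem_filter] at he
        have hle := HAaux.F_le hconn h3 (hEdef ▸ he.1)
        rwa [if_pos he.2] at hle)
      simpa [nsmul_eq_mul] using this
    have h_np : ∑ e ∈ E.filter (fun e => ¬ pend e), HAaux.Fterm T e ≤
        ((E.card - P.card : ℕ) : ℝ) := by
      have := Finset.sum_le_card_nsmul (E.filter (fun e => ¬ pend e)) (HAaux.Fterm T) 1
        (fun e he => by
          rw [Finset.mem_filter] at he
          have hle := HAaux.F_le hconn h3 (hEdef ▸ he.1)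
          rwa [if_neg he.2] at hle)
      rw [hcardnot] at this
      simpa [nsmul_eq_mul] using this
    have hc : ((E.card - P.card : ℕ) : ℝ) = (E.card : ℝ) - (P.card : ℝ) :=
      Nat.cast_sub hmE
    rw [hHA, hsplit]
    rw [hc, hEcast] at h_np
    linarith
  have hm2' : (2 : ℝ) ≤ (P.card : ℝ) := by exact_mod_cast hm2
  refine ⟨by linarith, ?_, ?_⟩
  · -- equality implies path
    intro heq
    have hm_le : P.card ≤ 2 := by
      by_contra hcon
      have h3m : (3 : ℝ) ≤ (P.card : ℝ) := by exact_mod_cast (by omega : 3 ≤ P.card)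
      linarith
    have hLcard : L.card = 2 := by omega
    obtain ⟨a, b, hab, hLab⟩ := Finset.card_eq_two.mp hLcard
    have ha : T.degree a = 1 := by
      have : a ∈ L := by rw [hLab]; simp
      rw [hLdef, Finset.mem_filter] at this
      exact this.2
    have hb : T.degree b = 1 := by
      have : b ∈ L := by rw [hLab]; simp
      rw [hLdef, Finset.mem_filter] at this
      exact this.2
    have hdeg : ∀ v, v ≠ a → v ≠ b → T.degree v = 2 := by
      intro v hva hvb
      refine HAaux.nonleaf_deg_two hT h2 hLcard v ?_
      intro h1
      have : v ∈ L := by rw [hLdef, Finset.mem_filter]; exact ⟨Finset.mem_univ _, h1⟩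
      rw [hLab] at this
      simp at this
      tauto
    exact HAaux.iso_of_two_leaves hT hn hcard hab ha hb hdeg
  · -- path implies equality
    rintro ⟨φ⟩
    have hLcard : L.card = 2 := by
      rw [hLdef, HAaux.leaves_transfer φ]
      exact HAaux.pathGraph_leaves_card hn
    have hPcard : P.card = 2 := by omega
    have hdeg12 : ∀ v : V, T.degree v = 1 ∨ T.degree v = 2 := by
      intro v
      by_cases h1 : T.degree v = 1
      · exact Or.inl h1
      · exact Or.inr (HAaux.nonleaf_deg_two hT h2 hLcard v h1)
    have h_p : ∑ e ∈ P, HAaux.Fterm T e = (P.card : ℝ) * (8 / 9) := by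
      have hcg : ∑ e ∈ P, HAaux.Fterm T e = ∑ _e ∈ P, (8 / 9 : ℝ) :=
        Finset.sum_congr rfl (fun e he => by
          rw [hPdef, Finset.mem_filter] at he
          have := HAaux.F_eq hconn h3 hdeg12 (hEdef ▸ he.1)
          rwa [if_pos he.2] at this)
      rw [hcg, Finset.sum_const, nsmul_eq_mul]
    have h_np : ∑ e ∈ E.filter (fun e => ¬ pend e), HAaux.Fterm T e =
        ((E.card - P.card : ℕ) : ℝ) := by
      have hcg : ∑ e ∈ E.filter (fun e => ¬ pend e), HAaux.Fterm T e =
          ∑ _e ∈ E.filter (fun e => ¬ pend e), (1 : ℝ) :=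
        Finset.sum_congr rfl (fun e he => by
          rw [Finset.mem_filter] at he
          have := HAaux.F_eq hconn h3 hdeg12 (hEdef ▸ he.1)
          rwa [if_neg he.2] at this)
      rw [hcg, Finset.sum_const, nsmul_eq_mul, mul_one, hcardnot]
    have hc : ((E.card - P.card : ℕ) : ℝ) = (E.card : ℝ) - (P.card : ℝ) :=
      Nat.cast_sub hmE
    have hP2 : (P.card : ℝ) = 2 := by exact_mod_cast hPcard
    rw [hHA, hsplit, h_p, h_np, hc, hEcast, hP2]
    ring
end

section
/- For a connected graph G on n ≥ 4 vertices, HA(G) ≤ |E(G)| with equality if and only if G is regular, and HA(G) ≥ 4(1-1/n)²·|E(G)|/(n-1) in particular when G is a tree HA(G) ≥ 4(1-1/n)² with equality iff G = S_n. -/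
open Finset
open scoped Classical

private lemma auxLeOne {a b : ℝ} (ha : 0 < a) (hb : 0 < b) : 4*a*b/(a+b)^2 ≤ 1 := by
  rw [div_le_one (by positivity)]; nlinarith [sq_nonneg (a-b)]

private lemma auxEqOne {a b : ℝ} (ha : 0 < a) (hb : 0 < b) : 4*a*b/(a+b)^2 = 1 ↔ a = b := by
  rw [div_eq_one_iff_eq (by positivity)]
  constructor
  · intro h; nlinarith [sq_nonneg (a-b)]
  · intro h; subst h; ring

private lemma auxLower {a b N : ℝ} (h1a : 1 ≤ a) (h1b : 1 ≤ b) (haN : a ≤ N) (hbN : b ≤ N) :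
    4*N/(N+1)^2 ≤ 4*a*b/(a+b)^2 := by
  have hN : 1 ≤ N := le_trans h1a haN
  rw [div_le_div_iff₀ (by positivity) (by positivity)]
  nlinarith [mul_nonneg (by nlinarith : (0:ℝ) ≤ a*N - b) (by nlinarith : (0:ℝ) ≤ b*N - a)]

private lemma auxEqL {a b N : ℝ} (h1a : 1 ≤ a) (h1b : 1 ≤ b) (haN : a ≤ N) (hbN : b ≤ N)
    (hN : 1 < N) : 4*a*b/(a+b)^2 = 4*N/(N+1)^2 ↔ (a=1∧b=N)∨(a=N∧b=1) := by
  constructor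
  · intro h
    rw [div_eq_div_iff (by positivity) (by positivity)] at h
    have key : (a*N - b) * (b*N - a) = 0 := by nlinarith
    rcases mul_eq_zero.1 key with h1 | h1
    · left
      have haa : a = 1 := by nlinarith
      exact ⟨haa, by nlinarith⟩
    · right
      have hbb : b = 1 := by nlinarith
      exact ⟨by nlinarith, hbb⟩
  · rintro (⟨rfl, rfl⟩ | ⟨rfl, rfl⟩) <;> ring_nf


/-- For a connected graph `G` on `n ≥ 4` vertices: `HA(G) ≤ |E(G)|` with equality iff `G`
is regular; `HA(G) ≥ 4(1-1/n)² |E(G)|/(n-1)`; and if `G` is a tree then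
`HA(G) ≥ 4(1-1/n)²` with equality iff `G` is the star `S_n`. -/
theorem HA_connected_bounds {V : Type*} [Fintype V] (G : SimpleGraph V) (n : ℕ) (hn : 4 ≤ n)
    (hconn : G.Connected) (hcard : Fintype.card V = n) :
    HA G ≤ G.edgeFinset.card ∧
    (HA G = G.edgeFinset.card ↔ ∃ d : ℕ, G.IsRegularOfDegree d) ∧
    HA G ≥ 4 * (1 - 1 / (n : ℝ)) ^ 2 * G.edgeFinset.card / ((n : ℝ) - 1) ∧
    (G.IsTree → HA G ≥ 4 * (1 - 1 / (n : ℝ)) ^ 2 ∧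
      (HA G = 4 * (1 - 1 / (n : ℝ)) ^ 2 ↔ Nonempty (G ≃g starGraph n))) := by
  classical
  haveI hV : Nonempty V := by rw [← Fintype.card_pos_iff, hcard]; omega
  -- basic numeric facts
  have hnR : (4:ℝ) ≤ n := by exact_mod_cast hn
  have hn0 : (n:ℝ) ≠ 0 := by positivity
  have hn1 : (n:ℝ) - 1 ≠ 0 := by intro h; nlinarith
  have hNcast : ((n - 1 : ℕ) : ℝ) = (n:ℝ) - 1 := by
    rw [Nat.cast_sub (by omega)]; norm_num
  set F : Sym2 V → ℝ := fun e => Sym2.lift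
    ⟨fun u v => 4 * (G.degree u : ℝ) * G.degree v / ((G.degree u : ℝ) + G.degree v) ^ 2,
      fun u v => by ring_nf⟩ e with hF
  have hHA : HA G = ∑ e ∈ G.edgeFinset, F e := rfl
  have hFmk : ∀ u v : V, F s(u,v) =
      4 * (G.degree u : ℝ) * G.degree v / ((G.degree u : ℝ) + G.degree v) ^ 2 :=
    fun u v => Sym2.lift_mk ..
  set L : ℝ := 4 * ((n:ℝ) - 1) / (n:ℝ)^2 with hLdef
  have hLalt : 4 * ((n:ℝ)-1) / (((n:ℝ)-1) + 1)^2 = L := by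
    rw [hLdef]; ring_nf
  -- degree bounds
  have hdge1 : ∀ {u v : V}, G.Adj u v → (1:ℝ) ≤ G.degree u := by
    intro u v h
    have : 0 < G.degree u := (G.degree_pos_iff_exists_adj u).2 ⟨v, h⟩
    exact_mod_cast this
  have hdle : ∀ u : V, (G.degree u : ℝ) ≤ (n:ℝ) - 1 := by
    intro u
    have h := G.degree_lt_card_verts u
    rw [hcard] at h
    have h2 : (G.degree u : ℝ) + 1 ≤ n := by exact_mod_cast h
    linarith
  have hmemE : ∀ u v : V, s(u,v) ∈ G.edgeFinset ↔ G.Adj u v := by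
    intro u v; rw [SimpleGraph.mem_edgeFinset, SimpleGraph.mem_edgeSet]
  -- per-edge bounds
  have hFup : ∀ e ∈ G.edgeFinset, F e ≤ 1 := by
    intro e he
    induction e using Sym2.ind with
    | _ u v =>
      rw [hmemE] at he
      rw [hFmk]
      exact auxLeOne (by have := hdge1 he; linarith) (by have := hdge1 he.symm; linarith)
  have hFlow : ∀ e ∈ G.edgeFinset, L ≤ F e := by
    intro e he
    induction e using Sym2.ind with
    | _ u v =>
      rw [hmemE] at he
      rw [hFmk, ← hLalt]
      exact auxLower (hdge1 he) (hdge1 he.symm) (hdle u) (hdle v)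
  have hm0 : (0:ℝ) ≤ (G.edgeFinset.card : ℝ) := Nat.cast_nonneg _
  -- PART 1
  have part1 : HA G ≤ (G.edgeFinset.card : ℝ) := by
    rw [hHA]
    calc ∑ e ∈ G.edgeFinset, F e ≤ ∑ _e ∈ G.edgeFinset, (1:ℝ) := Finset.sum_le_sum hFup
    _ = G.edgeFinset.card := by simp
  -- existence of a neighbor
  have exists_adj : ∀ v : V, ∃ w, G.Adj v w := by
    intro v
    obtain ⟨w, hw⟩ := Fintype.exists_ne_of_one_lt_card (by omega) v
    obtain ⟨p⟩ := hconn v w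
    cases p with
    | nil => exact absurd rfl hw
    | cons ha _ => exact ⟨_, ha⟩
  -- PART 2
  have part2 : HA G = (G.edgeFinset.card : ℝ) ↔ ∃ d : ℕ, G.IsRegularOfDegree d := by
    constructor
    · intro h
      have hsum : ∑ e ∈ G.edgeFinset, F e = ∑ _e ∈ G.edgeFinset, (1:ℝ) := by
        rw [← hHA, h]; simp
      have hall := (Finset.sum_eq_sum_iff_of_le hFup).1 hsum
      have hadjdeg : ∀ u v : V, G.Adj u v → G.degree u = G.degree v := by
        intro u v huv
        have h1 := hall s(u,v) ((hmemE u v).2 huv)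
        rw [hFmk] at h1
        have := (auxEqOne (a := (G.degree u : ℝ)) (b := (G.degree v : ℝ))
          (by have := hdge1 huv; linarith) (by have := hdge1 huv.symm; linarith)).1 h1
        exact_mod_cast this
      obtain ⟨v₀⟩ := hV
      refine ⟨G.degree v₀, fun v => ?_⟩
      obtain ⟨p⟩ := hconn v v₀
      clear hsum hall
      induction p with
      | nil => rfl
      | cons ha _ ih => exact (hadjdeg _ _ ha).trans ih
    · rintro ⟨d, hreg⟩
      rw [hHA]
      have : ∀ e ∈ G.edgeFinset, F e = 1 := by
        intro e he
        induction e using Sym2.ind with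
        | _ u v =>
          rw [hmemE] at he
          rw [hFmk]
          exact (auxEqOne (by have := hdge1 he; linarith) (by have := hdge1 he.symm; linarith)).2
            (by rw [hreg u, hreg v])
      rw [Finset.sum_congr rfl this]; simp
  -- PART 3
  have hLsum : HA G ≥ (G.edgeFinset.card : ℝ) * L := by
    rw [hHA]
    calc (G.edgeFinset.card : ℝ) * L = ∑ _e ∈ G.edgeFinset, L := by
          rw [Finset.sum_const, nsmul_eq_mul]
    _ ≤ ∑ e ∈ G.edgeFinset, F e := Finset.sum_le_sum hFlow
  have hLrw : ∀ m : ℝ, 4 * (1 - 1 / (n : ℝ)) ^ 2 * m / ((n : ℝ) - 1) = m * L := by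
    intro m; rw [hLdef]; field_simp
  have part3 : HA G ≥ 4 * (1 - 1 / (n : ℝ)) ^ 2 * G.edgeFinset.card / ((n : ℝ) - 1) := by
    rw [hLrw]; exact hLsum
  refine ⟨part1, part2, part3, ?_⟩
  -- PART 4
  intro htree
  have hmn : G.edgeFinset.card = n - 1 := by
    have := htree.card_edgeFinset; omega
  have hmR : (G.edgeFinset.card : ℝ) = (n:ℝ) - 1 := by rw [hmn, hNcast]
  have hconst : 4 * (1 - 1 / (n : ℝ)) ^ 2 = ((n:ℝ) - 1) * L := by
    rw [hLdef]; field_simp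
  constructor
  · calc HA G ≥ (G.edgeFinset.card : ℝ) * L := hLsum
    _ = 4 * (1 - 1 / (n : ℝ)) ^ 2 := by rw [hmR, ← hconst]
  constructor
  · -- equality → star
    intro heq
    have hsum : ∑ _e ∈ G.edgeFinset, L = ∑ e ∈ G.edgeFinset, F e := by
      rw [← hHA, heq, Finset.sum_const, nsmul_eq_mul, hmR, ← hconst]
    have hall := (Finset.sum_eq_sum_iff_of_le hFlow).1 hsum
    -- each edge has degrees {1, n-1}
    have hdegs : ∀ u v : V, G.Adj u v →
        (G.degree u = 1 ∧ G.degree v = n - 1) ∨ (G.degree u = n - 1 ∧ G.degree v = 1) := by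
      intro u v huv
      have h1 := (hall s(u,v) ((hmemE u v).2 huv)).symm
      rw [hFmk, ← hLalt] at h1
      have h2 := (auxEqL (hdge1 huv) (hdge1 huv.symm) (hdle u) (hdle v)
        (by linarith)).1 h1
      rcases h2 with ⟨ha, hb⟩ | ⟨ha, hb⟩
      · left
        constructor
        · exact_mod_cast ha
        · rw [← hNcast] at hb; exact_mod_cast hb
      · right
        constructor
        · rw [← hNcast] at ha; exact_mod_cast ha
        · exact_mod_cast hb
    -- find the center
    obtain ⟨v₀⟩ := hV
    obtain ⟨w₀, hw₀⟩ := exists_adj v₀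
    have hcases := hdegs v₀ w₀ hw₀
    have hn1ne : n - 1 ≠ 1 := by omega
    obtain ⟨c, hdegc⟩ : ∃ c : V, G.degree c = n - 1 := by
      rcases hcases with ⟨_, h⟩ | ⟨h, _⟩
      · exact ⟨w₀, h⟩
      · exact ⟨v₀, h⟩
    -- c is adjacent to everything else
    have hnb : G.neighborFinset c = Finset.univ.erase c := by
      apply Finset.eq_of_subset_of_card_le
      · intro x hx
        rw [SimpleGraph.mem_neighborFinset] at hx
        exact Finset.mem_erase.2 ⟨hx.ne', Finset.mem_univ x⟩
      · rw [Finset.card_erase_of_mem (Finset.mem_univ c), Finset.card_univ, hcard,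
          SimpleGraph.card_neighborFinset_eq_degree, hdegc]
    have hadjc : ∀ v : V, v ≠ c → G.Adj c v := by
      intro v hv
      rw [← SimpleGraph.mem_neighborFinset, hnb]
      exact Finset.mem_erase.2 ⟨hv, Finset.mem_univ v⟩
    have hdeg1 : ∀ v : V, v ≠ c → G.degree v = 1 := by
      intro v hv
      rcases hdegs c v (hadjc v hv) with ⟨h1, _⟩ | ⟨_, h2⟩
      · rw [hdegc] at h1; omega
      · exact h2
    have hno : ∀ u v : V, u ≠ c → v ≠ c → ¬ G.Adj u v := by
      intro u v hu hv hadj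
      have hsub : ({c, v} : Finset V) ⊆ G.neighborFinset u := by
        intro x hx
        rw [Finset.mem_insert, Finset.mem_singleton] at hx
        rw [SimpleGraph.mem_neighborFinset]
        rcases hx with rfl | rfl
        · exact (hadjc u hu).symm
        · exact hadj
      have h2 : ({c, v} : Finset V).card = 2 := by
        rw [Finset.card_insert_of_notMem (by simp [Ne.symm hv]), Finset.card_singleton]
      have := Finset.card_le_card hsub
      rw [h2, SimpleGraph.card_neighborFinset_eq_degree, hdeg1 u hu] at this
      omega
    have hadj_iff : ∀ u v : V, G.Adj u v ↔ u ≠ v ∧ (u = c ∨ v = c) := by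
      intro u v
      constructor
      · intro h
        refine ⟨h.ne, ?_⟩
        by_contra hcon
        push_neg at hcon
        exact hno u v hcon.1 hcon.2 h
      · rintro ⟨hne, rfl | rfl⟩
        · exact hadjc v (fun h => hne h.symm)
        · exact (hadjc u hne).symm
    -- build the isomorphism
    haveI : NeZero n := ⟨by omega⟩
    have hval : ∀ a : Fin n, a.val = 0 ↔ a = 0 := fun a => Fin.val_eq_zero_iff
    let e0 : V ≃ Fin n := Fintype.equivFinOfCardEq hcard
    let e : V ≃ Fin n := e0.trans (Equiv.swap (e0 c) 0)
    have hec : e c = 0 := by simp [e, Equiv.swap_apply_left]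
    have he0 : ∀ u : V, e u = 0 ↔ u = c := by
      intro u
      rw [← hec]
      exact ⟨fun h => e.injective h, fun h => by rw [h]⟩
    refine ⟨⟨e, ?_⟩⟩
    intro u v
    have hstar : (starGraph n).Adj (e u) (e v) ↔ (u ≠ v ∧ (u = c ∨ v = c)) := by
      simp only [starGraph, SimpleGraph.fromRel_adj, hval, he0, ne_eq,
        EmbeddingLike.apply_eq_iff_eq]
    rw [hstar, hadj_iff]
  · -- star → equality
    rintro ⟨φ⟩
    haveI : NeZero n := ⟨by omega⟩
    have hval : ∀ a : Fin n, a.val = 0 ↔ a = 0 := fun a => Fin.val_eq_zero_iff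
    set c : V := φ.symm 0 with hc
    have hφc : φ c = 0 := by simp [hc]
    have hφ0 : ∀ u : V, φ u = 0 ↔ u = c := by
      intro u
      rw [← hφc]
      exact ⟨fun h => φ.injective h, fun h => by rw [h]⟩
    have hadj_iff : ∀ u v : V, G.Adj u v ↔ u ≠ v ∧ (u = c ∨ v = c) := by
      intro u v
      rw [← φ.map_rel_iff]
      simp only [starGraph, SimpleGraph.fromRel_adj, hval, hφ0, ne_eq,
        EmbeddingLike.apply_eq_iff_eq]
      exact Iff.and (not_congr φ.injective.eq_iff) (Iff.or (hφ0 u) (hφ0 v))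
    have hnb : G.neighborFinset c = Finset.univ.erase c := by
      ext x
      rw [SimpleGraph.mem_neighborFinset, hadj_iff, Finset.mem_erase]
      constructor
      · rintro ⟨h1, _⟩; exact ⟨fun h => h1 h.symm, Finset.mem_univ x⟩
      · rintro ⟨h1, _⟩; exact ⟨fun h => h1 h.symm, Or.inl rfl⟩
    have hdegc : G.degree c = n - 1 := by
      rw [← SimpleGraph.card_neighborFinset_eq_degree, hnb,
        Finset.card_erase_of_mem (Finset.mem_univ c), Finset.card_univ, hcard]
    have hdeg1 : ∀ v : V, v ≠ c → G.degree v = 1 := by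
      intro v hv
      rw [← SimpleGraph.card_neighborFinset_eq_degree]
      have : G.neighborFinset v = {c} := by
        ext x
        rw [SimpleGraph.mem_neighborFinset, hadj_iff, Finset.mem_singleton]
        constructor
        · rintro ⟨h1, rfl | rfl⟩
          · exact absurd rfl hv
          · rfl
        · rintro rfl; exact ⟨hv, Or.inr rfl⟩
      rw [this, Finset.card_singleton]
    have hallL : ∀ e ∈ G.edgeFinset, F e = L := by
      intro e he
      induction e using Sym2.ind with
      | _ u v =>
        rw [hmemE] at he
        rw [hFmk, ← hLalt]
        have hun := (hadj_iff u v).1 he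
        rcases hun.2 with rfl | rfl
        · have h1 : G.degree v = 1 := hdeg1 v (fun h => hun.1 h.symm)
          rw [hdegc, h1, hNcast]
          push_cast
          ring_nf
        · have h1 : G.degree u = 1 := hdeg1 u hun.1
          rw [hdegc, h1, hNcast]
          push_cast
          ring_nf
    rw [hHA, Finset.sum_congr rfl hallL, Finset.sum_const, nsmul_eq_mul, hmR, ← hconst]
end

section
/- Let T be a molecular tree with m_{1,2} = m_{1,3} = m_{2,2} = m_{2,3} = m_{3,3} = 0. Then m_{2,4} = 2n_2 and m_{3,4} = 3n_3, and consequently Γ_HA(T) = (4/225)n_2 + (72/1225)n_3. -/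
open Finset
open scoped Classical

lemma not_adj_of_edgeCnt_zero {V : Type*} [Fintype V] (T : SimpleGraph V) {s t : ℕ}
    (h : edgeCnt T s t = 0) {u w : V} (huw : T.Adj u w) :
    ¬ (T.degree u = s ∧ T.degree w = t) := by
  rintro ⟨h1, h2⟩
  have he := Finset.card_eq_zero.mp h
  have hm : s(u, w) ∈ T.edgeFinset.filter fun e =>
      Sym2.lift ⟨fun u v => (T.degree u = s ∧ T.degree v = t) ∨ (T.degree u = t ∧ T.degree v = s),
        fun u v => propext (by tauto)⟩ e := by
    simp only [Finset.mem_filter, SimpleGraph.mem_edgeFinset, SimpleGraph.mem_edgeSet,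
      Sym2.lift_mk]
    exact ⟨huw, Or.inl ⟨h1, h2⟩⟩
  rw [he] at hm
  exact absurd hm (Finset.notMem_empty _)

lemma edgeCnt_eq_mul_degCnt {V : Type*} [Fintype V] (T : SimpleGraph V) (k : ℕ)
    (hk : ∀ u w, T.Adj u w → T.degree u = k → T.degree w = 4) (hk4 : k ≠ 4) :
    edgeCnt T k 4 = k * degCnt T k := by
  classical
  have hset : (T.edgeFinset.filter fun e =>
      Sym2.lift ⟨fun u v => (T.degree u = k ∧ T.degree v = 4) ∨ (T.degree u = 4 ∧ T.degree v = k),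
        fun u v => propext (by tauto)⟩ e)
      = (Finset.univ.filter fun v => T.degree v = k).biUnion (fun v => T.incidenceFinset v) := by
    ext e
    induction e using Sym2.ind with
    | _ a b =>
      simp only [Finset.mem_filter, SimpleGraph.mem_edgeFinset, SimpleGraph.mem_edgeSet,
        Sym2.lift_mk, Finset.mem_biUnion, Finset.mem_univ, true_and,
        SimpleGraph.mem_incidenceFinset, SimpleGraph.incidenceSet, Set.mem_setOf_eq,
        Set.mem_sep_iff, SimpleGraph.mem_edgeSet]
      constructor
      · rintro ⟨hab, (⟨ha, hb⟩ | ⟨ha, hb⟩)⟩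
        · exact ⟨a, ha, hab, by simp⟩
        · exact ⟨b, hb, hab, by simp⟩
      · rintro ⟨v, hv, hab, hmem⟩
        refine ⟨hab, ?_⟩
        rcases Sym2.mem_iff.mp hmem with rfl | rfl
        · exact Or.inl ⟨hv, hk _ _ hab hv⟩
        · exact Or.inr ⟨hk _ _ hab.symm hv, hv⟩
  unfold edgeCnt
  rw [hset, Finset.card_biUnion]
  · unfold degCnt
    rw [Finset.sum_congr rfl (fun v hv => ?_), Finset.sum_const, smul_eq_mul, mul_comm]
    have := (Finset.mem_filter.mp hv).2
    rw [T.card_incidenceFinset_eq_degree, this]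
  · intro v hv v' hv' hne
    simp only [Finset.mem_coe, Finset.mem_filter, Finset.mem_univ, true_and] at hv hv'
    rw [Function.onFun, Finset.disjoint_left]
    intro e he he'
    rw [SimpleGraph.mem_incidenceFinset] at he he'
    obtain ⟨hedge, hve⟩ := he
    obtain ⟨_, hv'e⟩ := he'
    have : e = s(v, v') := (Sym2.mem_and_mem_iff hne).mp ⟨hve, hv'e⟩
    rw [this, SimpleGraph.mem_edgeSet] at hedge
    exact hk4 (hv' ▸ hk _ _ hedge hv)

/-- If `m_{1,2} = m_{1,3} = m_{2,2} = m_{2,3} = m_{3,3} = 0` in a molecular tree, then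
`m_{2,4} = 2 n_2`, `m_{3,4} = 3 n_3`, and `Γ_HA(T) = (4/225) n_2 + (72/1225) n_3`. -/
theorem gamma_special_form {V : Type*} [Fintype V] (T : SimpleGraph V) (hT : T.IsTree)
    (hmol : ∀ v : V, T.degree v ≤ 4)
    (h12 : edgeCnt T 1 2 = 0) (h13 : edgeCnt T 1 3 = 0) (h22 : edgeCnt T 2 2 = 0)
    (h23 : edgeCnt T 2 3 = 0) (h33 : edgeCnt T 3 3 = 0) :
    edgeCnt T 2 4 = 2 * degCnt T 2 ∧ edgeCnt T 3 4 = 3 * degCnt T 3 ∧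
    (83 / 225 : ℝ) * edgeCnt T 1 2 + (3 / 20) * edgeCnt T 1 3 + (6 / 25) * edgeCnt T 2 2 +
      (3 / 25) * edgeCnt T 2 3 + (2 / 225) * edgeCnt T 2 4 + (2 / 25) * edgeCnt T 3 3 +
      (24 / 1225) * edgeCnt T 3 4 =
      (4 / 225) * degCnt T 2 + (72 / 1225) * degCnt T 3 := by
  have hdegpos : ∀ u w : V, T.Adj u w → 1 ≤ T.degree w := fun u w h =>
    (T.degree_pos_iff_exists_adj w).mpr ⟨u, h.symm⟩
  have hk2 : ∀ u w, T.Adj u w → T.degree u = 2 → T.degree w = 4 := by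
    intro u w h hu
    have h1 := hdegpos u w h
    have h4 := hmol w
    have : T.degree w = 1 ∨ T.degree w = 2 ∨ T.degree w = 3 ∨ T.degree w = 4 := by omega
    rcases this with hw | hw | hw | hw
    · exact absurd ⟨hw, hu⟩ (not_adj_of_edgeCnt_zero T h12 h.symm)
    · exact absurd ⟨hu, hw⟩ (not_adj_of_edgeCnt_zero T h22 h)
    · exact absurd ⟨hu, hw⟩ (not_adj_of_edgeCnt_zero T h23 h)
    · exact hw
  have hk3 : ∀ u w, T.Adj u w → T.degree u = 3 → T.degree w = 4 := by
    intro u w h hu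
    have h1 := hdegpos u w h
    have h4 := hmol w
    have : T.degree w = 1 ∨ T.degree w = 2 ∨ T.degree w = 3 ∨ T.degree w = 4 := by omega
    rcases this with hw | hw | hw | hw
    · exact absurd ⟨hw, hu⟩ (not_adj_of_edgeCnt_zero T h13 h.symm)
    · exact absurd ⟨hw, hu⟩ (not_adj_of_edgeCnt_zero T h23 h.symm)
    · exact absurd ⟨hu, hw⟩ (not_adj_of_edgeCnt_zero T h33 h)
    · exact hw
  have e24 := edgeCnt_eq_mul_degCnt T 2 hk2 (by norm_num)
  have e34 := edgeCnt_eq_mul_degCnt T 3 hk3 (by norm_num)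
  refine ⟨e24, e34, ?_⟩
  rw [h12, h13, h22, h23, h33, e24, e34]
  push_cast
  ring
end

section
/- Let T be a molecular tree such that either max{m_{1,2}, m_{1,3}, m_{2,2}, m_{3,3}, m_{2,3}} ≥ 1, or n_3 ≥ 1 and n_2 ≥ 3. Then Γ_HA(T) > 8/225. -/
open Finset
open scoped Classical

lemma edgeCnt_pos {V : Type*} [Fintype V] (G : SimpleGraph V) {s t : ℕ} {u v : V}
    (h : G.Adj u v) (hu : G.degree u = s) (hv : G.degree v = t) : 1 ≤ edgeCnt G s t := by
  rw [edgeCnt]; apply Finset.card_pos.mpr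
  exact ⟨s(u, v), Finset.mem_filter.mpr ⟨SimpleGraph.mem_edgeFinset.mpr h, Or.inl ⟨hu, hv⟩⟩⟩

/-- If `max{m_{1,2}, m_{1,3}, m_{2,2}, m_{3,3}, m_{2,3}} ≥ 1`, or `n_3 ≥ 1` and `n_2 ≥ 3`,
then `Γ_HA(T) > 8/225`. -/
theorem gamma_gt {V : Type*} [Fintype V] (T : SimpleGraph V) (hT : T.IsTree)
    (hmol : ∀ v : V, T.degree v ≤ 4)
    (hyp : 1 ≤ max (edgeCnt T 1 2) (max (edgeCnt T 1 3)
        (max (edgeCnt T 2 2) (max (edgeCnt T 3 3) (edgeCnt T 2 3)))) ∨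
      (1 ≤ degCnt T 3 ∧ 3 ≤ degCnt T 2)) :
    (83 / 225 : ℝ) * edgeCnt T 1 2 + (3 / 20) * edgeCnt T 1 3 + (6 / 25) * edgeCnt T 2 2 +
      (3 / 25) * edgeCnt T 2 3 + (2 / 225) * edgeCnt T 2 4 + (2 / 25) * edgeCnt T 3 3 +
      (24 / 1225) * edgeCnt T 3 4 > 8 / 225 := by
  have c12 : (0 : ℝ) ≤ edgeCnt T 1 2 := Nat.cast_nonneg _
  have c13 : (0 : ℝ) ≤ edgeCnt T 1 3 := Nat.cast_nonneg _
  have c22 : (0 : ℝ) ≤ edgeCnt T 2 2 := Nat.cast_nonneg _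
  have c23 : (0 : ℝ) ≤ edgeCnt T 2 3 := Nat.cast_nonneg _
  have c24 : (0 : ℝ) ≤ edgeCnt T 2 4 := Nat.cast_nonneg _
  have c33 : (0 : ℝ) ≤ edgeCnt T 3 3 := Nat.cast_nonneg _
  have c34 : (0 : ℝ) ≤ edgeCnt T 3 4 := Nat.cast_nonneg _
  -- helper to finish from a bound on one count
  have finish5 : 1 ≤ edgeCnt T 1 2 ∨ 1 ≤ edgeCnt T 1 3 ∨ 1 ≤ edgeCnt T 2 2 ∨
      1 ≤ edgeCnt T 3 3 ∨ 1 ≤ edgeCnt T 2 3 →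
      (83 / 225 : ℝ) * edgeCnt T 1 2 + (3 / 20) * edgeCnt T 1 3 + (6 / 25) * edgeCnt T 2 2 +
      (3 / 25) * edgeCnt T 2 3 + (2 / 225) * edgeCnt T 2 4 + (2 / 25) * edgeCnt T 3 3 +
      (24 / 1225) * edgeCnt T 3 4 > 8 / 225 := by
    rintro (h | h | h | h | h) <;>
      [ (have : (1 : ℝ) ≤ edgeCnt T 1 2 := by exact_mod_cast h);
        (have : (1 : ℝ) ≤ edgeCnt T 1 3 := by exact_mod_cast h);
        (have : (1 : ℝ) ≤ edgeCnt T 2 2 := by exact_mod_cast h);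
        (have : (1 : ℝ) ≤ edgeCnt T 3 3 := by exact_mod_cast h);
        (have : (1 : ℝ) ≤ edgeCnt T 2 3 := by exact_mod_cast h)] <;>
      linarith
  rcases hyp with h | ⟨h3, _⟩
  · apply finish5
    rcases le_max_iff.mp h with h | h
    · exact Or.inl h
    rcases le_max_iff.mp h with h | h
    · exact Or.inr (Or.inl h)
    rcases le_max_iff.mp h with h | h
    · exact Or.inr (Or.inr (Or.inl h))
    rcases le_max_iff.mp h with h | h
    · exact Or.inr (Or.inr (Or.inr (Or.inl h)))
    · exact Or.inr (Or.inr (Or.inr (Or.inr h)))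
  · -- there is a vertex of degree 3
    rw [degCnt] at h3
    obtain ⟨v, hv⟩ := Finset.card_pos.mp h3
    have hdv : T.degree v = 3 := (Finset.mem_filter.mp hv).2
    by_cases h5 : 1 ≤ edgeCnt T 1 2 ∨ 1 ≤ edgeCnt T 1 3 ∨ 1 ≤ edgeCnt T 2 2 ∨
        1 ≤ edgeCnt T 3 3 ∨ 1 ≤ edgeCnt T 2 3
    · exact finish5 h5
    push_neg at h5
    obtain ⟨h12, h13, h22, h33, h23⟩ := h5
    -- every neighbor of v has degree 4
    have hnb : ∀ u ∈ T.neighborFinset v, T.degree u = 4 := by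
      intro u hu
      rw [SimpleGraph.mem_neighborFinset] at hu
      have hpos : 1 ≤ T.degree u :=
        (T.degree_pos_iff_exists_adj u).mpr ⟨v, hu.symm⟩
      have hub : T.degree u ≤ 4 := hmol u
      interval_cases hdu : T.degree u
      · exact absurd (edgeCnt_pos T hu.symm hdu hdv) (by omega)
      · exact absurd (edgeCnt_pos T hu.symm hdu hdv) (by omega)
      · exact absurd (edgeCnt_pos T hu hdv hdu) (by omega)
      · rfl
    -- m_{3,4} ≥ 3
    have hm34 : 3 ≤ edgeCnt T 3 4 := by
      have : (T.neighborFinset v).card ≤ edgeCnt T 3 4 := by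
        apply Finset.card_le_card_of_injOn (fun u => s(v, u))
        · intro u hu
          refine Finset.mem_filter.mpr ⟨SimpleGraph.mem_edgeFinset.mpr
            ((SimpleGraph.mem_neighborFinset _ _ _).mp hu), Or.inl ⟨hdv, hnb u hu⟩⟩
        · intro a _ b _ hab
          exact Sym2.congr_right.mp hab
      rwa [SimpleGraph.card_neighborFinset_eq_degree, hdv] at this
    have hm34' : (3 : ℝ) ≤ edgeCnt T 3 4 := by exact_mod_cast hm34
    linarith
end

section
/- For n ≥ 8 with n ≡ 2 (mod 3), every molecular tree T of order n satisfies HA(T) ≥ (19n-31)/25, with equality if and only if T has no vertices of degree 2 or 3 (i.e., all degrees are 1 or 4). -/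
open Finset
open scoped Classical

/-- Vertices reachable from a set closed under adjacency stay in the set. -/
lemma walk_closed_aux {V : Type*} {G : SimpleGraph V} (S : Set V)
    (hS : ∀ ⦃a b : V⦄, a ∈ S → G.Adj a b → b ∈ S) :
    ∀ {a w : V} (_ : G.Walk a w), a ∈ S → w ∈ S := by
  intro a w p
  induction p with
  | nil => exact id
  | cons h q ih => exact fun ha => ih (hS ha h)

/-- Summing `g u + g v` over all edges equals the degree-weighted vertex sum. -/
lemma sum_lift_add_aux {V : Type*} [Fintype V] (G : SimpleGraph V) [DecidableRel G.Adj]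
    (g : V → ℝ) :
    ∑ e ∈ G.edgeFinset, Sym2.lift ⟨fun u v => g u + g v, fun u v => by ring⟩ e
      = ∑ v, (G.degree v : ℝ) * g v := by
  classical
  have h1 : ∑ d : G.Dart, g d.fst = ∑ v, (G.degree v : ℝ) * g v := by
    rw [← Finset.sum_fiberwise_of_maps_to
      (g := fun d : G.Dart => d.fst) (t := Finset.univ)
      (fun d _ => Finset.mem_univ d.fst) (fun d : G.Dart => g d.fst)]
    refine Finset.sum_congr rfl fun v _ => ?_
    have : ∀ d ∈ Finset.univ.filter (fun d : G.Dart => d.fst = v), g d.fst = g v := by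
      intro d hd
      rw [Finset.mem_filter] at hd
      rw [hd.2]
    rw [Finset.sum_congr rfl this, Finset.sum_const, ← G.dart_fst_fiber_card_eq_degree v,
      nsmul_eq_mul]
  have h2 : ∑ d : G.Dart, g d.fst
      = ∑ e ∈ G.edgeFinset, Sym2.lift ⟨fun u v => g u + g v, fun u v => by ring⟩ e := by
    rw [← Finset.sum_fiberwise_of_maps_to
      (g := fun d : G.Dart => d.edge) (t := G.edgeFinset)
      (fun d _ => (SimpleGraph.mem_edgeFinset).2 d.edge_mem) (fun d : G.Dart => g d.fst)]
    refine Finset.sum_congr rfl ?_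
    intro e he
    induction e with
    | _ u v =>
      rw [SimpleGraph.mem_edgeFinset, SimpleGraph.mem_edgeSet] at he
      let d0 : G.Dart := ⟨(u, v), he⟩
      have hfib : Finset.univ.filter (fun d : G.Dart => d.edge = s(u, v)) = {d0, d0.symm} := by
        have := d0.edge_fiber
        convert this using 2
        exact Iff.rfl
      rw [hfib, Finset.sum_pair d0.symm_ne.symm, Sym2.lift_mk]
      rfl
  rw [← h2, h1]

/-- The key per-edge numerical inequality and its equality cases. -/
lemma per_edge_aux {s t : ℕ} (hs1 : 1 ≤ s) (hs4 : s ≤ 4) (ht1 : 1 ≤ t) (ht4 : t ≤ 4) :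
    (31/50 - 12/(25*(s:ℝ))) + (31/50 - 12/(25*(t:ℝ))) ≤ 4*(s:ℝ)*t/((s:ℝ)+t)^2 ∧
    (4*(s:ℝ)*t/((s:ℝ)+t)^2 = (31/50 - 12/(25*(s:ℝ))) + (31/50 - 12/(25*(t:ℝ))) ↔
      ((s = 1 ∧ t = 4) ∨ (s = 4 ∧ t = 1) ∨ (s = 4 ∧ t = 4))) := by
  interval_cases s <;> interval_cases t <;> norm_num

/-- For `n ≥ 8` with `n ≡ 2 (mod 3)`, every molecular tree of order `n` satisfies
`HA(T) ≥ (19n-31)/25`, with equality iff all degrees are `1` or `4`. -/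
theorem HA_min_mod2 {V : Type*} [Fintype V] (T : SimpleGraph V) (n : ℕ) (hn : 8 ≤ n)
    (hmod : n % 3 = 2) (hT : T.IsTree) (hcard : Fintype.card V = n)
    (hmol : ∀ v : V, T.degree v ≤ 4) :
    HA T ≥ (19 * (n : ℝ) - 31) / 25 ∧
    (HA T = (19 * (n : ℝ) - 31) / 25 ↔ degCnt T 2 = 0 ∧ degCnt T 3 = 0) := by
  classical
  have hc8 : 8 ≤ Fintype.card V := hcard ▸ hn
  have hconn := hT.isConnected
  -- every vertex has degree at least 1
  have hdeg : ∀ v : V, 1 ≤ T.degree v := by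
    intro v
    rw [Nat.one_le_iff_ne_zero, ← Nat.pos_iff_ne_zero, SimpleGraph.degree_pos_iff_exists_adj]
    obtain ⟨w, hw⟩ := Fintype.exists_ne_of_one_lt_card (by omega) v
    obtain ⟨p⟩ := hconn.preconnected v w
    cases p with
    | nil => exact absurd rfl hw
    | cons h q => exact ⟨_, h⟩
  -- no edge has both endpoints of degree 1
  have hnoleaf : ∀ u v : V, T.Adj u v → ¬(T.degree u = 1 ∧ T.degree v = 1) := by
    rintro u v huv ⟨hu, hv⟩
    have hNu : T.neighborFinset u = {v} := by
      obtain ⟨a, ha⟩ := Finset.card_eq_one.mp (by rw [← SimpleGraph.card_neighborFinset_eq_degree] at hu; exact hu)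
      have hv' : v ∈ T.neighborFinset u := (SimpleGraph.mem_neighborFinset _ _ _).2 huv
      rw [ha] at hv' ⊢
      rw [Finset.mem_singleton.mp hv']
    have hNv : T.neighborFinset v = {u} := by
      obtain ⟨a, ha⟩ := Finset.card_eq_one.mp (by rw [← SimpleGraph.card_neighborFinset_eq_degree] at hv; exact hv)
      have hu' : u ∈ T.neighborFinset v := (SimpleGraph.mem_neighborFinset _ _ _).2 huv.symm
      rw [ha] at hu' ⊢
      rw [Finset.mem_singleton.mp hu']
    have hclosed : ∀ ⦃a b : V⦄, a ∈ ({u, v} : Set V) → T.Adj a b → b ∈ ({u, v} : Set V) := by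
      rintro a b (rfl | rfl) hab
      · have : b ∈ T.neighborFinset a := (SimpleGraph.mem_neighborFinset _ _ _).2 hab
        rw [hNu] at this
        right; exact Finset.mem_singleton.mp this
      · have : b ∈ T.neighborFinset a := (SimpleGraph.mem_neighborFinset _ _ _).2 hab
        rw [hNv] at this
        left; exact Finset.mem_singleton.mp this
    have hsub : (Finset.univ : Finset V) ⊆ {u, v} := by
      intro w _
      obtain ⟨p⟩ := hconn.preconnected u w
      have := walk_closed_aux ({u, v} : Set V) hclosed p (Or.inl rfl)
      simp only [Set.mem_insert_iff, Set.mem_singleton_iff] at this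
      rcases this with h | h <;> simp [h]
    have : Fintype.card V ≤ 2 := by
      calc Fintype.card V = (Finset.univ : Finset V).card := (Finset.card_univ).symm
        _ ≤ ({u, v} : Finset V).card := Finset.card_le_card hsub
        _ ≤ 2 := Finset.card_insert_le _ _ |>.trans (by simp)
    omega
  -- degree sum
  have hE : T.edgeFinset.card + 1 = n := by rw [hT.card_edgeFinset, hcard]
  have hsumdeg : ∑ v, T.degree v + 2 = 2 * n := by
    have := T.sum_degrees_eq_twice_card_edges
    omega
  -- the beta-weighted vertex sum
  have hB : ∑ v, (T.degree v : ℝ) * (31/50 - 12/(25*(T.degree v : ℝ)))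
      = (19 * (n : ℝ) - 31) / 25 := by
    have h1 : ∀ v : V, (T.degree v : ℝ) * (31/50 - 12/(25*(T.degree v : ℝ)))
        = (31/50) * (T.degree v : ℝ) - 12/25 := by
      intro v
      have h0 : (T.degree v : ℝ) ≠ 0 := by
        have := hdeg v
        positivity
      field_simp
    rw [Finset.sum_congr rfl fun v _ => h1 v, Finset.sum_sub_distrib, ← Finset.mul_sum,
      Finset.sum_const, Finset.card_univ, hcard]
    have hs : (∑ v, (T.degree v : ℝ)) = 2 * (n : ℝ) - 2 := by
      have : ((∑ v, T.degree v : ℕ) : ℝ) + 2 = 2 * (n : ℝ) := by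
        exact_mod_cast congrArg (Nat.cast : ℕ → ℝ) hsumdeg
      push_cast at this ⊢
      linarith
    rw [hs, nsmul_eq_mul]
    ring
  -- abbreviations for the two edge functions
  set Fl : Sym2 V → ℝ := Sym2.lift ⟨fun u v =>
      4 * (T.degree u : ℝ) * T.degree v / ((T.degree u : ℝ) + T.degree v) ^ 2,
      fun u v => by ring_nf⟩ with hFl
  set Gl : Sym2 V → ℝ := Sym2.lift ⟨fun u v =>
      (31/50 - 12/(25*(T.degree u : ℝ))) + (31/50 - 12/(25*(T.degree v : ℝ))),
      fun u v => by ring⟩ with hGl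
  have hHA : HA T = ∑ e ∈ T.edgeFinset, Fl e := rfl
  have hGsum : ∑ e ∈ T.edgeFinset, Gl e = (19 * (n : ℝ) - 31) / 25 := by
    rw [hGl]
    rw [sum_lift_add_aux T (fun v => 31/50 - 12/(25*(T.degree v : ℝ)))]
    exact hB
  -- per-edge inequality
  have key : ∀ e ∈ T.edgeFinset, Gl e ≤ Fl e := by
    intro e he
    induction e with
    | _ u v =>
      rw [hFl, hGl, Sym2.lift_mk, Sym2.lift_mk]
      exact (per_edge_aux (hdeg u) (hmol u) (hdeg v) (hmol v)).1
  have keyeq : ∀ u v : V, T.Adj u v → (Fl s(u, v) = Gl s(u, v) ↔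
      ((T.degree u = 1 ∧ T.degree v = 4) ∨ (T.degree u = 4 ∧ T.degree v = 1) ∨
        (T.degree u = 4 ∧ T.degree v = 4))) := by
    intro u v _
    rw [hFl, hGl, Sym2.lift_mk, Sym2.lift_mk]
    exact (per_edge_aux (hdeg u) (hmol u) (hdeg v) (hmol v)).2
  have hineq : (19 * (n : ℝ) - 31) / 25 ≤ HA T := by
    rw [hHA, ← hGsum]
    exact Finset.sum_le_sum key
  refine ⟨hineq, ?_⟩
  have hiff : HA T = (19 * (n : ℝ) - 31) / 25 ↔ ∀ e ∈ T.edgeFinset, Gl e = Fl e := by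
    rw [hHA, ← hGsum, eq_comm]
    exact Finset.sum_eq_sum_iff_of_le key
  rw [hiff]
  constructor
  · intro hall
    have hno : ∀ v : V, T.degree v ≠ 2 ∧ T.degree v ≠ 3 := by
      intro v
      have hv1 := hdeg v
      obtain ⟨w, hw⟩ := (T.degree_pos_iff_exists_adj v).mp (by omega : 0 < T.degree v)
      have he : s(v, w) ∈ T.edgeFinset := (SimpleGraph.mem_edgeFinset).2 hw
      have := (keyeq v w hw).1 (hall _ he).symm
      constructor <;> rintro hv2 <;> rcases this with ⟨h, _⟩ | ⟨h, _⟩ | ⟨h, _⟩ <;> omega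
    refine ⟨?_, ?_⟩ <;> rw [degCnt, Finset.card_eq_zero, Finset.filter_eq_empty_iff]
    · intro v _
      exact (hno v).1
    · intro v _
      exact (hno v).2
  · rintro ⟨h2, h3⟩
    have hd14 : ∀ v : V, T.degree v = 1 ∨ T.degree v = 4 := by
      intro v
      have hn2 : T.degree v ≠ 2 := by
        intro h
        have : v ∈ Finset.univ.filter fun v => T.degree v = 2 := by
          simp [h]
        rw [degCnt, Finset.card_eq_zero] at h2
        rw [h2] at this
        exact absurd this (Finset.notMem_empty v)
      have hn3 : T.degree v ≠ 3 := by
        intro h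
        have : v ∈ Finset.univ.filter fun v => T.degree v = 3 := by
          simp [h]
        rw [degCnt, Finset.card_eq_zero] at h3
        rw [h3] at this
        exact absurd this (Finset.notMem_empty v)
      have := hdeg v
      have := hmol v
      omega
    intro e he
    induction e with
    | _ u v =>
      rw [SimpleGraph.mem_edgeFinset, SimpleGraph.mem_edgeSet] at he
      refine ((keyeq u v he).2 ?_).symm
      have hnl := hnoleaf u v he
      rcases hd14 u with hu | hu <;> rcases hd14 v with hv | hv
      · exact absurd ⟨hu, hv⟩ hnl
      · exact Or.inl ⟨hu, hv⟩
      · exact Or.inr (Or.inl ⟨hu, hv⟩)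
      · exact Or.inr (Or.inr ⟨hu, hv⟩)
end

section
/- For n ≥ 9 with n ≡ 0 (mod 3), every molecular tree T of order n satisfies HA(T) ≥ (19n-31)/25 + 4/225, with equality if and only if T has no vertex of degree 3 and exactly one vertex of degree 2, both of whose neighbors have degree 4. -/
open Finset
open scoped Classical

namespace HAaux

/-- The edge weight of the HA index as a function of the endpoint degrees. -/
noncomputable def wR (s t : ℕ) : ℝ := 4 * s * t / ((s : ℝ) + t) ^ 2

/-- LP certificate vertex weights. -/
noncomputable def aR (s : ℕ) : ℝ :=
  if s = 1 then 7/50 else if s = 2 then 7/18 else if s = 3 then 47/100 else 1/2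

lemma slack_nn {s t : ℕ} (hs1 : 1 ≤ s) (hs4 : s ≤ 4) (ht1 : 1 ≤ t) (ht4 : t ≤ 4) :
    aR s + aR t ≤ wR s t := by
  interval_cases s <;> interval_cases t <;> norm_num [wR, aR]

lemma slack_eq_iff {s t : ℕ} (hs1 : 1 ≤ s) (hs4 : s ≤ 4) (ht1 : 1 ≤ t) (ht4 : t ≤ 4) :
    aR s + aR t = wR s t ↔
      ((s = 1 ∧ t = 4) ∨ (s = 4 ∧ t = 1) ∨ (s = 2 ∧ t = 4) ∨ (s = 4 ∧ t = 2) ∨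
        (s = 4 ∧ t = 4)) := by
  interval_cases s <;> interval_cases t <;> norm_num [wR, aR]

variable {V : Type*} [Fintype V] (G : SimpleGraph V) [DecidableRel G.Adj]

lemma sum_dart_edge (φ : Sym2 V → ℝ) :
    ∑ d : G.Dart, φ d.edge = 2 * ∑ e ∈ G.edgeFinset, φ e := by
  classical
  rw [← Finset.sum_fiberwise_of_maps_to (g := fun d : G.Dart => d.edge)
    (t := G.edgeFinset) (fun d _ => by simp [SimpleGraph.mem_edgeFinset]) (fun d => φ d.edge)]
  rw [Finset.mul_sum]
  refine Finset.sum_congr rfl fun e he => ?_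
  have hcard : #({d : G.Dart | d.edge = e} : Finset _) = 2 :=
    G.dart_edge_fiber_card e (SimpleGraph.mem_edgeFinset.mp he)
  have hcg : ∑ d ∈ Finset.univ.filter (fun d : G.Dart => d.edge = e), φ d.edge
      = ∑ _d ∈ Finset.univ.filter (fun d : G.Dart => d.edge = e), φ e :=
    Finset.sum_congr rfl (fun d hd => by rw [(Finset.mem_filter.mp hd).2])
  rw [hcg, Finset.sum_const]
  have : Finset.univ.filter (fun d : G.Dart => d.edge = e)
      = ({d : G.Dart | d.edge = e} : Finset _) := rfl
  rw [this, hcard]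
  ring

lemma sum_dart_fst (f : V → ℝ) :
    ∑ d : G.Dart, f d.toProd.1 = ∑ v, (G.degree v : ℝ) * f v := by
  classical
  rw [← Finset.sum_fiberwise_of_maps_to (g := fun d : G.Dart => d.toProd.1)
    (t := Finset.univ) (fun d _ => Finset.mem_univ _) (fun d => f d.toProd.1)]
  refine Finset.sum_congr rfl fun v _ => ?_
  have hcg : ∑ d ∈ Finset.univ.filter (fun d : G.Dart => d.toProd.1 = v), f d.toProd.1
      = ∑ _d ∈ Finset.univ.filter (fun d : G.Dart => d.toProd.1 = v), f v :=
    Finset.sum_congr rfl (fun d hd => by rw [(Finset.mem_filter.mp hd).2])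
  rw [hcg, Finset.sum_const]
  have : #(Finset.univ.filter (fun d : G.Dart => d.toProd.1 = v)) = G.degree v :=
    G.dart_fst_fiber_card_eq_degree v
  rw [this, nsmul_eq_mul]

lemma sum_dart_snd (f : V → ℝ) :
    ∑ d : G.Dart, f d.toProd.2 = ∑ v, (G.degree v : ℝ) * f v := by
  rw [← sum_dart_fst G f]
  exact Fintype.sum_bijective SimpleGraph.Dart.symm
    (SimpleGraph.Dart.symm_involutive.bijective) _ _ (fun d => rfl)

lemma degree_pos (hconn : G.Connected) (hc : 2 ≤ Fintype.card V) (v : V) :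
    1 ≤ G.degree v := by
  obtain ⟨u, hu⟩ := Fintype.exists_ne_of_one_lt_card (by omega) v
  obtain ⟨p⟩ := hconn.preconnected v u
  cases p with
  | nil => exact absurd rfl hu
  | cons h _ => exact (G.degree_pos_iff_exists_adj v).mpr ⟨_, h⟩

lemma no_leaf_edge (hconn : G.Connected) (hc : 3 ≤ Fintype.card V) {u v : V}
    (h : G.Adj u v) (hu : G.degree u = 1) (hv : G.degree v = 1) : False := by
  have huniq : ∀ x : V, G.degree x = 1 → ∀ y z, G.Adj x y → G.Adj x z → y = z := by
    intro x hx y z hy hz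
    have hcard : #(G.neighborFinset x) ≤ 1 := by
      rw [SimpleGraph.card_neighborFinset_eq_degree, hx]
    exact Finset.card_le_one.mp hcard y (by simpa using hy) z (by simpa using hz)
  have key : ∀ (x y : V) (p : G.Walk x y), (x = u ∨ x = v) → (y = u ∨ y = v) := by
    intro x y p
    induction p with
    | nil => exact id
    | @cons a b c hab p ih =>
      rintro (rfl | rfl)
      · exact ih (Or.inr (huniq a hu b v hab h))
      · exact ih (Or.inl (huniq a hv b u hab h.symm))
  have hsub : (Finset.univ : Finset V) ⊆ {u, v} := by
    intro x _
    obtain ⟨p⟩ := hconn.preconnected u x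
    rcases key u x p (Or.inl rfl) with rfl | rfl <;> simp
  have := Finset.card_le_card hsub
  rw [Finset.card_univ] at this
  have h2 : #({u, v} : Finset V) ≤ 2 := Finset.card_insert_le _ _ |>.trans (by simp)
  omega

lemma sum_fiber_deg {β : Type*} [AddCommMonoid β] (hdeg : ∀ v, G.degree v < 5) (F : ℕ → β) :
    ∑ v, F (G.degree v) = ∑ t ∈ Finset.range 5,
      #(Finset.univ.filter fun v => G.degree v = t) • F t := by
  rw [← Finset.sum_fiberwise_of_maps_to (g := fun v => G.degree v)
    (t := Finset.range 5) (fun v _ => Finset.mem_range.mpr (hdeg v)) (fun v => F (G.degree v))]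
  refine Finset.sum_congr rfl fun t _ => ?_
  have hcg : ∑ v ∈ Finset.univ.filter (fun v => G.degree v = t), F (G.degree v)
      = ∑ _v ∈ Finset.univ.filter (fun v => G.degree v = t), F t :=
    Finset.sum_congr rfl (fun v hv => by rw [(Finset.mem_filter.mp hv).2])
  rw [hcg, Finset.sum_const]

end HAaux

open HAaux

/-- For `n ≥ 9` with `n ≡ 0 (mod 3)`, every molecular tree of order `n` satisfies
`HA(T) ≥ (19n-31)/25 + 4/225`, with equality iff `T` has no vertex of degree `3` and
exactly one vertex of degree `2`, both of whose neighbors have degree `4`. -/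
theorem HA_min_mod0 {V : Type*} [Fintype V] (T : SimpleGraph V) (n : ℕ) (hn : 9 ≤ n)
    (hmod : n % 3 = 0) (hT : T.IsTree) (hcard : Fintype.card V = n)
    (hmol : ∀ v : V, T.degree v ≤ 4) :
    HA T ≥ (19 * (n : ℝ) - 31) / 25 + 4 / 225 ∧
    (HA T = (19 * (n : ℝ) - 31) / 25 + 4 / 225 ↔
      degCnt T 3 = 0 ∧ degCnt T 2 = 1 ∧
      ∀ v w : V, T.degree v = 2 → T.Adj v w → T.degree w = 4) := by
  classical
  have hconn : T.Connected := hT.isConnected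
  have hc2 : 2 ≤ Fintype.card V := by omega
  have hc3 : 3 ≤ Fintype.card V := by omega
  have hdpos : ∀ v, 1 ≤ T.degree v := degree_pos T hconn hc2
  have hd5 : ∀ v, T.degree v < 5 := fun v => by have := hmol v; omega
  -- degree counts
  set Nt : ℕ → ℕ := fun t => #(Finset.univ.filter fun v => T.degree v = t) with hNt
  have hdegCnt : ∀ t, degCnt T t = Nt t := by
    intro t
    simp only [degCnt, hNt, Finset.filter_congr_decidable]
  have hN0 : Nt 0 = 0 := by
    rw [hNt]
    simp only [Finset.card_eq_zero, Finset.filter_eq_empty_iff]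
    intro v _
    have := hdpos v; omega
  -- counting identities
  have h1 : Nt 0 + Nt 1 + Nt 2 + Nt 3 + Nt 4 = n := by
    have := Finset.card_eq_sum_card_fiberwise
      (f := fun v : V => T.degree v) (s := Finset.univ) (t := Finset.range 5)
      (fun v _ => Finset.mem_range.mpr (hd5 v))
    rw [Finset.card_univ, hcard] at this
    rw [this]
    simp [Finset.sum_range_succ, hNt]
  have hedge : #T.edgeFinset + 1 = n := by rw [hT.card_edgeFinset, hcard]
  have h2 : Nt 1 + 2 * Nt 2 + 3 * Nt 3 + 4 * Nt 4 = 2 * (n - 1) := by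
    have hfib := sum_fiber_deg T hd5 (fun t => t)
    rw [T.sum_degrees_eq_twice_card_edges] at hfib
    have : #T.edgeFinset = n - 1 := by omega
    rw [this] at hfib
    rw [hfib]
    simp [Finset.sum_range_succ, hNt, smul_eq_mul]
    ring
  -- the dart-sum expression for HA
  have hHA2 : ∑ d : T.Dart, wR (T.degree d.toProd.1) (T.degree d.toProd.2) = 2 * HA T := by
    rw [HA, ← sum_dart_edge]
    refine Finset.sum_congr rfl fun d _ => ?_
    obtain ⟨⟨x, y⟩, hxy⟩ := d
    simp [SimpleGraph.Dart.edge, wR]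
  -- vertex-weight sum
  set S : ℝ := ∑ v, (T.degree v : ℝ) * aR (T.degree v) with hSdef
  have hS2 : ∑ d : T.Dart, (aR (T.degree d.toProd.1) + aR (T.degree d.toProd.2)) = 2 * S := by
    rw [Finset.sum_add_distrib,
      sum_dart_fst T (fun v => aR (T.degree v)), sum_dart_snd T (fun v => aR (T.degree v))]
    ring
  -- slack terms
  set sl : T.Dart → ℝ := fun d =>
    wR (T.degree d.toProd.1) (T.degree d.toProd.2)
      - (aR (T.degree d.toProd.1) + aR (T.degree d.toProd.2)) with hsl
  have hsl_nn : ∀ d : T.Dart, 0 ≤ sl d := fun d =>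
    sub_nonneg.mpr (slack_nn (hdpos _) (hmol _) (hdpos _) (hmol _))
  have hsum_sl : ∑ d : T.Dart, sl d = 2 * HA T - 2 * S := by
    rw [hsl, Finset.sum_sub_distrib, hHA2, hS2]
  -- evaluate S
  have hSeval : S = (Nt 1 : ℝ) * (7/50) + (Nt 2 : ℝ) * (7/9) + (Nt 3 : ℝ) * (141/100)
      + (Nt 4 : ℝ) * 2 := by
    rw [hSdef]
    rw [sum_fiber_deg T hd5 (fun t => (t : ℝ) * aR t)]
    simp [Finset.sum_range_succ, hNt, aR]
    ring
  -- cast identities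
  have hR1 : (Nt 0 : ℝ) + Nt 1 + Nt 2 + Nt 3 + Nt 4 = n := by exact_mod_cast h1
  have hR2 : (Nt 1 : ℝ) + 2 * Nt 2 + 3 * Nt 3 + 4 * Nt 4 = 2 * n - 2 := by
    have : (Nt 1 + 2 * Nt 2 + 3 * Nt 3 + 4 * Nt 4 : ℕ) = 2 * n - 2 := by omega
    have h' : (2 : ℕ) ≤ 2 * n := by omega
    exact_mod_cast this ▸ (by push_cast [Nat.cast_sub h']; ring :
      ((2 * n - 2 : ℕ) : ℝ) = 2 * (n : ℝ) - 2)
  have hR0 : (Nt 0 : ℝ) = 0 := by exact_mod_cast hN0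
  have hSlin : S = 19 * (n : ℝ) / 25 - 31/25 + (4/225) * Nt 2 + (3/100) * Nt 3 := by
    rw [hSeval]
    linear_combination (-12/25) * hR1 + (31/50) * hR2 + (12/25) * hR0
  have hNt_pos : ∀ (t : ℕ) (v : V), T.degree v = t → 1 ≤ Nt t := by
    intro t v hv
    exact Finset.card_pos.mpr ⟨v, by simp [hNt, hv]⟩
  clear_value Nt
  -- the key decomposition
  have hdecomp : HA T - ((19 * (n : ℝ) - 31) / 25 + 4 / 225)
      = (1/2) * ∑ d : T.Dart, sl d + ((16 * Nt 2 + 27 * Nt 3 : ℝ) - 16) / 900 := by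
    have : HA T = S + (1/2) * ∑ d : T.Dart, sl d := by
      rw [hsum_sl]; ring
    rw [this, hSlin]; ring
  have hΦnat : 16 * Nt 2 + 27 * Nt 3 ≥ 16 := by
    rcases Nat.eq_zero_or_pos (Nt 2) with h | h
    · rcases Nat.eq_zero_or_pos (Nt 3) with h' | h' <;> omega
    · omega
  have hΦR : ((16 * Nt 2 + 27 * Nt 3 : ℝ) - 16) / 900 ≥ 0 := by
    have : (16 : ℝ) ≤ 16 * Nt 2 + 27 * Nt 3 := by exact_mod_cast hΦnat
    linarith
  have hsum_nn : 0 ≤ ∑ d : T.Dart, sl d := Finset.sum_nonneg fun d _ => hsl_nn d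
  constructor
  · linarith [hdecomp]
  constructor
  · -- equality → structure
    intro heq
    rw [heq] at hdecomp
    have hsum0 : ∑ d : T.Dart, sl d = 0 := by linarith
    have hΦ0 : ((16 * Nt 2 + 27 * Nt 3 : ℝ) - 16) / 900 = 0 := by linarith
    have hΦ0' : 16 * Nt 2 + 27 * Nt 3 = 16 := by
      have : (16 * Nt 2 + 27 * Nt 3 : ℝ) = 16 := by linarith
      exact_mod_cast this
    have hN2 : Nt 2 = 1 := by omega
    have hN3 : Nt 3 = 0 := by omega
    have hall : ∀ d : T.Dart, sl d = 0 := by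
      intro d
      exact (Finset.sum_eq_zero_iff_of_nonneg (fun d _ => hsl_nn d)).mp hsum0 d (Finset.mem_univ d)
    refine ⟨by rw [hdegCnt]; exact hN3, by rw [hdegCnt]; exact hN2, ?_⟩
    intro v w hv hvw
    have hd0 := hall ⟨(v, w), hvw⟩
    rw [hsl] at hd0
    simp only at hd0
    have htight : aR (T.degree v) + aR (T.degree w) = wR (T.degree v) (T.degree w) := by
      linarith
    have := (slack_eq_iff (hdpos v) (hmol v) (hdpos w) (hmol w)).mp htight
    rcases this with ⟨h, _⟩ | ⟨h, h'⟩ | ⟨_, h'⟩ | ⟨h, _⟩ | ⟨_, h'⟩ <;> omega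
  · -- structure → equality
    rintro ⟨h3, h2', hcond⟩
    rw [hdegCnt] at h3 h2'
    have hne3 : ∀ v : V, T.degree v ≠ 3 := by
      intro v hv
      have := hNt_pos 3 v hv
      omega
    have hall : ∀ d : T.Dart, sl d = 0 := by
      intro d
      obtain ⟨⟨x, y⟩, hxy⟩ := d
      rw [hsl]
      simp only
      have hx1 := hdpos x; have hx4 := hmol x; have hy1 := hdpos y; have hy4 := hmol y
      have hx3 := hne3 x; have hy3 := hne3 y
      by_cases hx2 : T.degree x = 2
      · have : T.degree y = 4 := hcond x y hx2 hxy
        rw [hx2, this]; norm_num [wR, aR]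
      · by_cases hy2 : T.degree y = 2
        · have : T.degree x = 4 := hcond y x hy2 hxy.symm
          rw [hy2, this]; norm_num [wR, aR]
        · have hx : T.degree x = 1 ∨ T.degree x = 4 := by omega
          have hy : T.degree y = 1 ∨ T.degree y = 4 := by omega
          rcases hx with hx | hx <;> rcases hy with hy | hy
          · exact absurd (no_leaf_edge T hconn hc3 hxy hx hy) id
          all_goals rw [hx, hy]; norm_num [wR, aR]
    have hsum0 : ∑ d : T.Dart, sl d = 0 := Finset.sum_eq_zero fun d _ => hall d
    rw [hsum0, h2', h3] at hdecomp
    push_cast at hdecomp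
    linarith
end

section
/- For n ≥ 13 with n ≡ 1 (mod 3), every molecular tree T of order n satisfies HA(T) ≥ (19n-31)/25 + 8/225, with equality if and only if T has no vertex of degree 3 and exactly two vertices of degree 2, each of whose neighbors all have degree 4. -/
open Finset
open scoped Classical

/-! ### Arithmetic core -/

private lemma L_mod (n n1 n2 n3 n4 : ℕ) (H : n1+n2+n3+n4 = n)
    (HS : n1+2*n2+3*n3+4*n4 = 2*n-2) (hn : 13 ≤ n) (hmod : n % 3 = 1) :
    ∃ k, n2 + 2*n3 = 3*k + 2 := ⟨(n2+2*n3-2)/3, by omega⟩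

private lemma L_low (b12 b13 b22 b23 b24 b33 b34 n2 n3 : ℕ)
    (R2 : b12 + b22 + b23 + b24 = 2*n2) (R3 : b13 + b23 + b33 + b34 = 3*n3) :
    32536*b12 + 13230*b13 + 10584*b22 + 10584*b23 + 784*b24 + 3528*b33 + 1728*b34
      ≥ 1568*n2 + 5184*n3 := by omega

private lemma L_eq1 (n2 n3 k : ℕ) (hlow' : 1568*n2 + 5184*n3 ≤ 3136)
    (hmod2 : n2 + 2*n3 = 3*k + 2) : n3 = 0 ∧ n2 = 2 := by omega

private lemma L_eq2 (b12 b13 b22 b23 b24 b33 b34 : ℕ)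
    (R2 : b12 + b22 + b23 + b24 = 4) (R3 : b13 + b23 + b33 + b34 = 0)
    (hle : 32536*b12 + 13230*b13 + 10584*b22 + 10584*b23 + 784*b24 + 3528*b33 + 1728*b34 ≤ 3136) :
    b12 = 0 ∧ b22 = 0 ∧ b23 = 0 := by omega

private lemma L_id (n n1 n2 n3 n4 b12 b13 b14 b22 b23 b24 b33 b34 b44 K : ℕ)
    (R1 : b12 + b13 + b14 = n1)
    (R2 : b12 + b22 + b23 + b24 = 2*n2)
    (R3 : b13 + b23 + b33 + b34 = 3*n3)
    (R4 : b14 + b24 + b34 + b44 = 4*n4)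
    (H : n1+n2+n3+n4 = n)
    (HS : n1+2*n2+3*n3+4*n4 = 2*n-2) (hn : 13 ≤ n)
    (hK : K = 78400*b12 + 66150*b13 + 56448*b14 + 44100*b22 + 84672*b23 + 78400*b24
      + 44100*b33 + 86400*b34 + 44100*b44) :
    K + 109368 = (32536*b12 + 13230*b13 + 10584*b22 + 10584*b23 + 784*b24 + 3528*b33 + 1728*b34)
      + 67032*n := by omega

private lemma L_fin (K S n n2 n3 k : ℕ) (hid : K + 109368 = S + 67032*n)
    (hlow : S ≥ 1568*n2 + 5184*n3) (hmod2 : n2 + 2*n3 = 3*k + 2) :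
    K + 106232 ≥ 67032*n ∧ (K + 106232 = 67032*n → S ≤ 3136) := by
  have h2 : 1568*n2 + 5184*n3 ≥ 3136 := by omega
  omega

private lemma L_back (b12 b13 b22 b23 b24 b33 b34 n2 n3 K n : ℕ)
    (R2 : b12 + b22 + b23 + b24 = 2*n2) (R3 : b13 + b23 + b33 + b34 = 3*n3)
    (hid : K + 109368 = (32536*b12 + 13230*b13 + 10584*b22 + 10584*b23 + 784*b24
      + 3528*b33 + 1728*b34) + 67032*n)
    (h3 : n3 = 0) (h2 : n2 = 2) (hb12 : b12 = 0) (hb22 : b22 = 0) (hb23 : b23 = 0) :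
    K + 106232 = 67032*n := by omega

private lemma key_arith (n n1 n2 n3 n4 b12 b13 b14 b22 b23 b24 b33 b34 b44 K : ℕ)
    (hn : 13 ≤ n) (hmod : n % 3 = 1)
    (R1 : b12 + b13 + b14 = n1)
    (R2 : b12 + b22 + b23 + b24 = 2*n2)
    (R3 : b13 + b23 + b33 + b34 = 3*n3)
    (R4 : b14 + b24 + b34 + b44 = 4*n4)
    (H : n1+n2+n3+n4 = n)
    (HS : n1+2*n2+3*n3+4*n4 = 2*n-2)
    (hK : K = 78400*b12 + 66150*b13 + 56448*b14 + 44100*b22 + 84672*b23 + 78400*b24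
      + 44100*b33 + 86400*b34 + 44100*b44) :
    K + 106232 ≥ 67032*n ∧
      (K + 106232 = 67032*n ↔ (n3 = 0 ∧ n2 = 2 ∧ b12 = 0 ∧ b22 = 0 ∧ b23 = 0)) := by
  obtain ⟨k, hmod2⟩ := L_mod n n1 n2 n3 n4 H HS hn hmod
  have hlow := L_low b12 b13 b22 b23 b24 b33 b34 n2 n3 R2 R3
  have hid := L_id n n1 n2 n3 n4 b12 b13 b14 b22 b23 b24 b33 b34 b44 K R1 R2 R3 R4 H HS hn hK
  obtain ⟨hge, himp⟩ := L_fin K _ n n2 n3 k hid hlow hmod2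
  refine ⟨hge, ⟨fun h => ?_, ?_⟩⟩
  · have hle := himp h
    obtain ⟨h3, h2⟩ := L_eq1 n2 n3 k (le_trans hlow hle) hmod2
    obtain ⟨hb12, hb22, hb23⟩ := L_eq2 b12 b13 b22 b23 b24 b33 b34
      (by rw [h2] at R2; exact R2) (by rw [h3] at R3; simpa using R3) hle
    exact ⟨h3, h2, hb12, hb22, hb23⟩
  · rintro ⟨h3, h2, hb12, hb22, hb23⟩
    exact L_back b12 b13 b22 b23 b24 b33 b34 n2 n3 K n R2 R3 hid h3 h2 hb12 hb22 hb23

/-! ### Graph-theoretic bridge -/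

section Bridge

variable {V : Type*} [Fintype V]

private noncomputable def dcnt (G : SimpleGraph V) (s t : ℕ) : ℕ :=
  (Finset.univ.filter fun d : G.Dart => G.degree d.fst = s ∧ G.degree d.snd = t).card

private def Cw (s t : ℕ) : ℕ := 176400 * s * t / ((s + t) ^ 2)

private lemma icc14 : (Finset.Icc 1 4 : Finset ℕ) = {1, 2, 3, 4} := by decide

private lemma degCnt_card (G : SimpleGraph V) (s : ℕ) :
    (Finset.univ.filter fun v => G.degree v = s).card = degCnt G s := by
  unfold degCnt; congr 1

private lemma dcnt_symm (G : SimpleGraph V) (s t : ℕ) :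
    dcnt G s t = dcnt G t s := by
  unfold dcnt
  apply Finset.card_nbij' (fun d => d.symm) (fun d => d.symm)
  · intro d hd
    simp only [mem_coe, mem_filter, mem_univ, true_and] at hd ⊢
    exact ⟨hd.2, hd.1⟩
  · intro d hd
    simp only [mem_coe, mem_filter, mem_univ, true_and] at hd ⊢
    exact ⟨hd.2, hd.1⟩
  · intro d _; exact d.symm_symm
  · intro d _; exact d.symm_symm

private lemma dcnt_row (G : SimpleGraph V)
    (hdeg : ∀ v : V, 1 ≤ G.degree v ∧ G.degree v ≤ 4) (s : ℕ) :
    dcnt G s 1 + dcnt G s 2 + dcnt G s 3 + dcnt G s 4 = s * degCnt G s := by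
  have h1 : (Finset.univ.filter fun d : G.Dart => G.degree d.fst = s).card
      = s * degCnt G s := by
    rw [Finset.card_eq_sum_card_fiberwise (f := fun d : G.Dart => d.fst)
      (t := Finset.univ.filter fun v => G.degree v = s)
      (fun d hd => by simpa using (Finset.mem_filter.1 hd).2)]
    have hfib : ∀ v ∈ Finset.univ.filter (fun v => G.degree v = s),
        ((Finset.univ.filter fun d : G.Dart => G.degree d.fst = s).filter
          fun d => d.fst = v).card = s := by
      intro v hv
      have hv' : G.degree v = s := (Finset.mem_filter.1 hv).2
      have heq : ((Finset.univ.filter fun d : G.Dart => G.degree d.fst = s).filter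
          fun d => d.fst = v) = Finset.univ.filter fun d : G.Dart => d.fst = v := by
        ext d
        simp only [Finset.mem_filter, Finset.mem_univ, true_and]
        constructor
        · rintro ⟨_, h⟩; exact h
        · intro h; exact ⟨by rw [h, hv'], h⟩
      rw [heq, G.dart_fst_fiber_card_eq_degree v, hv']
    rw [Finset.sum_congr rfl hfib, Finset.sum_const, smul_eq_mul, mul_comm, degCnt_card]
  have h2 : (Finset.univ.filter fun d : G.Dart => G.degree d.fst = s).card
      = dcnt G s 1 + dcnt G s 2 + dcnt G s 3 + dcnt G s 4 := by
    rw [Finset.card_eq_sum_card_fiberwise (f := fun d : G.Dart => G.degree d.snd)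
      (t := Finset.Icc 1 4)
      (fun d _ => Finset.mem_Icc.2 (hdeg d.snd))]
    rw [icc14]
    simp only [Finset.filter_filter]
    rw [show ({1,2,3,4} : Finset ℕ) = insert 1 (insert 2 (insert 3 {4})) from rfl]
    rw [Finset.sum_insert (by decide), Finset.sum_insert (by decide),
      Finset.sum_insert (by decide), Finset.sum_singleton]
    unfold dcnt
    omega
  omega

private lemma degCnt_partition (G : SimpleGraph V)
    (hdeg : ∀ v : V, 1 ≤ G.degree v ∧ G.degree v ≤ 4) :
    degCnt G 1 + degCnt G 2 + degCnt G 3 + degCnt G 4 = Fintype.card V := by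
  have hmaps : ∀ v ∈ (Finset.univ : Finset V), G.degree v ∈ Finset.Icc 1 4 :=
    fun v _ => Finset.mem_Icc.2 (hdeg v)
  have h := Finset.card_eq_sum_card_fiberwise (f := fun v => G.degree v)
    (s := Finset.univ) (t := Finset.Icc 1 4) hmaps
  rw [Finset.card_univ] at h
  rw [h, icc14]
  rw [show ({1,2,3,4} : Finset ℕ) = insert 1 (insert 2 (insert 3 {4})) from rfl]
  rw [Finset.sum_insert (by decide), Finset.sum_insert (by decide),
    Finset.sum_insert (by decide), Finset.sum_singleton]
  rw [degCnt_card, degCnt_card, degCnt_card, degCnt_card]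
  ring

private lemma deg_sum_eq (G : SimpleGraph V)
    (hdeg : ∀ v : V, 1 ≤ G.degree v ∧ G.degree v ≤ 4) :
    ∑ v : V, G.degree v
      = degCnt G 1 + 2 * degCnt G 2 + 3 * degCnt G 3 + 4 * degCnt G 4 := by
  have hmaps : ∀ v ∈ (Finset.univ : Finset V), G.degree v ∈ Finset.Icc 1 4 :=
    fun v _ => Finset.mem_Icc.2 (hdeg v)
  rw [← Finset.sum_fiberwise_of_maps_to (g := fun v => G.degree v) (t := Finset.Icc 1 4)
    hmaps (fun v => G.degree v)]
  rw [icc14]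
  rw [show ({1,2,3,4} : Finset ℕ) = insert 1 (insert 2 (insert 3 {4})) from rfl]
  rw [Finset.sum_insert (by decide), Finset.sum_insert (by decide),
    Finset.sum_insert (by decide), Finset.sum_singleton]
  have hx : ∀ s : ℕ, ∑ v ∈ Finset.univ.filter (fun v => G.degree v = s), G.degree v
      = s * degCnt G s := by
    intro s
    rw [Finset.sum_congr rfl (fun v hv => (Finset.mem_filter.1 hv).2), Finset.sum_const,
      smul_eq_mul, mul_comm, degCnt_card]
  rw [hx 1, hx 2, hx 3, hx 4]
  ring

private lemma Cw_cast (a b : ℕ) (ha : 1 ≤ a) (ha4 : a ≤ 4) (hb : 1 ≤ b) (hb4 : b ≤ 4) :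
    (Cw a b : ℝ) = 44100 * (4 * (a : ℝ) * b / ((a : ℝ) + b) ^ 2) := by
  interval_cases a <;> interval_cases b <;> norm_num [Cw]

private lemma sum_dart_weight (G : SimpleGraph V) (f : Sym2 V → ℝ) :
    ∑ d : G.Dart, f d.edge = 2 * ∑ e ∈ G.edgeFinset, f e := by
  rw [← Finset.sum_fiberwise_of_maps_to (g := fun d : G.Dart => d.edge) (t := G.edgeFinset)
    (fun d _ => SimpleGraph.mem_edgeFinset.mpr d.edge_mem) (fun d => f d.edge), Finset.mul_sum]
  refine Finset.sum_congr rfl fun e he => ?_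
  rw [Finset.sum_congr rfl (fun d hd => by rw [(Finset.mem_filter.1 hd).2] :
      ∀ d ∈ Finset.univ.filter fun d : G.Dart => d.edge = e, f d.edge = f e),
    Finset.sum_const, G.dart_edge_fiber_card e (SimpleGraph.mem_edgeFinset.mp he), two_smul,
    two_mul]

private noncomputable def Kn (G : SimpleGraph V) : ℕ :=
  ∑ d : G.Dart, Cw (G.degree d.fst) (G.degree d.snd)

private lemma Kn_eq_HA (G : SimpleGraph V)
    (hdeg : ∀ v : V, 1 ≤ G.degree v ∧ G.degree v ≤ 4) :
    (Kn G : ℝ) = 88200 * HA G := by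
  have hw := sum_dart_weight G (fun e => Sym2.lift
    ⟨fun u v => 4 * (G.degree u : ℝ) * G.degree v / ((G.degree u : ℝ) + G.degree v) ^ 2,
      fun u v => by ring_nf⟩ e)
  have h2 : (88200 : ℝ) * HA G = 44100 * ∑ d : G.Dart,
      (4 * (G.degree d.fst : ℝ) * G.degree d.snd
        / ((G.degree d.fst : ℝ) + G.degree d.snd) ^ 2) := by
    have e1 : (88200 : ℝ) * HA G = 44100 * (2 * ∑ e ∈ G.edgeFinset, Sym2.lift
        ⟨fun u v => 4 * (G.degree u : ℝ) * G.degree v / ((G.degree u : ℝ) + G.degree v) ^ 2,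
          fun u v => by ring_nf⟩ e) := by
      rw [HA]; ring
    rw [e1, ← hw]
    exact congrArg _ (Finset.sum_congr rfl fun d _ => rfl)
  rw [h2, Kn, Nat.cast_sum, Finset.mul_sum]
  refine Finset.sum_congr rfl fun d _ => ?_
  exact Cw_cast _ _ (hdeg d.fst).1 (hdeg d.fst).2 (hdeg d.snd).1 (hdeg d.snd).2

private lemma Kn_partition (G : SimpleGraph V)
    (hdeg : ∀ v : V, 1 ≤ G.degree v ∧ G.degree v ≤ 4) :
    Kn G = ∑ s ∈ Finset.Icc 1 4, ∑ t ∈ Finset.Icc 1 4, Cw s t * dcnt G s t := by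
  rw [Kn, ← Finset.sum_fiberwise_of_maps_to (g := fun d : G.Dart => G.degree d.fst)
    (t := Finset.Icc 1 4) (fun d _ => Finset.mem_Icc.2 (hdeg d.fst))
    (fun d => Cw (G.degree d.fst) (G.degree d.snd))]
  refine Finset.sum_congr rfl fun s _ => ?_
  rw [← Finset.sum_fiberwise_of_maps_to (g := fun d : G.Dart => G.degree d.snd)
    (t := Finset.Icc 1 4) (fun d _ => Finset.mem_Icc.2 (hdeg d.snd))
    (fun d => Cw (G.degree d.fst) (G.degree d.snd))]
  refine Finset.sum_congr rfl fun t _ => ?_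
  rw [Finset.filter_filter]
  have hcg : ∀ d ∈ Finset.univ.filter
      (fun d : G.Dart => G.degree d.fst = s ∧ G.degree d.snd = t),
      Cw (G.degree d.fst) (G.degree d.snd) = Cw s t := by
    intro d hd
    obtain ⟨h1, h2⟩ := (Finset.mem_filter.1 hd).2
    rw [h1, h2]
  rw [Finset.sum_congr rfl hcg, Finset.sum_const, smul_eq_mul, mul_comm]
  rfl

private lemma deg_pos (G : SimpleGraph V) (hc : G.Connected) (h2 : 2 ≤ Fintype.card V) (v : V) :
    1 ≤ G.degree v := by
  obtain ⟨w, hw⟩ := Fintype.exists_ne_of_one_lt_card (by omega) v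
  obtain ⟨p⟩ := hc.preconnected v w
  cases p with
  | nil => exact absurd rfl hw
  | cons h q => exact (G.degree_pos_iff_exists_adj v).2 ⟨_, h⟩

private lemma walk_in_pair (G : SimpleGraph V) (v : V) (h2 : G.degree v = 1) :
    ∀ (u : V) (x : V) (p : G.Walk x u), G.Adj u v → G.degree u = 1 → x = u ∨ x = v := by
  intro u x p
  induction p with
  | nil => intro _ _; exact Or.inl rfl
  | @cons a c b hadj' q ih =>
    intro hadj h1
    rcases ih hadj h1 with h | h
    · right
      rw [h] at hadj'
      have ha : a ∈ G.neighborFinset b := (G.mem_neighborFinset _ _).2 hadj'.symm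
      have hv' : v ∈ G.neighborFinset b := (G.mem_neighborFinset _ _).2 hadj
      have hcard : (G.neighborFinset b).card ≤ 1 := by
        rw [G.card_neighborFinset_eq_degree, h1]
      exact Finset.card_le_one.1 hcard _ ha _ hv'
    · left
      rw [h] at hadj'
      have ha : a ∈ G.neighborFinset v := (G.mem_neighborFinset _ _).2 hadj'.symm
      have hb : b ∈ G.neighborFinset v := (G.mem_neighborFinset _ _).2 hadj.symm
      have hcard : (G.neighborFinset v).card ≤ 1 := by
        rw [G.card_neighborFinset_eq_degree, h2]
      exact Finset.card_le_one.1 hcard _ ha _ hb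

private lemma dcnt_one_one (G : SimpleGraph V) (hc : G.Connected)
    (h3 : 3 ≤ Fintype.card V) : dcnt G 1 1 = 0 := by
  rw [dcnt, Finset.card_eq_zero, Finset.filter_eq_empty_iff]
  rintro ⟨⟨u, v⟩, hadj⟩ - ⟨h1, h2⟩
  simp only at h1 h2
  have hsub : (Finset.univ : Finset V) ⊆ {u, v} := by
    intro x _
    rcases walk_in_pair G v h2 u x (hc.preconnected x u).some hadj h1 with h | h <;> simp [h]
  have hle := Finset.card_le_card hsub
  rw [Finset.card_univ] at hle
  have : ({u, v} : Finset V).card ≤ 2 :=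
    le_trans (Finset.card_insert_le _ _) (by simp)
  omega

end Bridge

/-- For `n ≥ 13` with `n ≡ 1 (mod 3)`, every molecular tree of order `n` satisfies
`HA(T) ≥ (19n-31)/25 + 8/225`, with equality iff `T` has no vertex of degree `3` and
exactly two vertices of degree `2`, each of whose neighbors all have degree `4`. -/
theorem HA_min_mod1 {V : Type*} [Fintype V] (T : SimpleGraph V) (n : ℕ) (hn : 13 ≤ n)
    (hmod : n % 3 = 1) (hT : T.IsTree) (hcard : Fintype.card V = n)
    (hmol : ∀ v : V, T.degree v ≤ 4) :
    HA T ≥ (19 * (n : ℝ) - 31) / 25 + 8 / 225 ∧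
    (HA T = (19 * (n : ℝ) - 31) / 25 + 8 / 225 ↔
      degCnt T 3 = 0 ∧ degCnt T 2 = 2 ∧
      ∀ v w : V, T.degree v = 2 → T.Adj v w → T.degree w = 4) := by
  have hconn : T.Connected := hT.isConnected
  have hV13 : 13 ≤ Fintype.card V := by omega
  have hdeg : ∀ v : V, 1 ≤ T.degree v ∧ T.degree v ≤ 4 :=
    fun v => ⟨deg_pos T hconn (by omega) v, hmol v⟩
  -- row identities
  have hd11 : dcnt T 1 1 = 0 := dcnt_one_one T hconn (by omega)
  have hrow1 := dcnt_row T hdeg 1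
  have hrow2 := dcnt_row T hdeg 2
  have hrow3 := dcnt_row T hdeg 3
  have hrow4 := dcnt_row T hdeg 4
  rw [dcnt_symm T 2 1] at hrow2
  rw [dcnt_symm T 3 1, dcnt_symm T 3 2] at hrow3
  rw [dcnt_symm T 4 1, dcnt_symm T 4 2, dcnt_symm T 4 3] at hrow4
  have R1 : dcnt T 1 2 + dcnt T 1 3 + dcnt T 1 4 = degCnt T 1 := by omega
  have R2 : dcnt T 1 2 + dcnt T 2 2 + dcnt T 2 3 + dcnt T 2 4 = 2 * degCnt T 2 := by omega
  have R3 : dcnt T 1 3 + dcnt T 2 3 + dcnt T 3 3 + dcnt T 3 4 = 3 * degCnt T 3 := by omega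
  have R4 : dcnt T 1 4 + dcnt T 2 4 + dcnt T 3 4 + dcnt T 4 4 = 4 * degCnt T 4 := by omega
  have H : degCnt T 1 + degCnt T 2 + degCnt T 3 + degCnt T 4 = n := by
    rw [degCnt_partition T hdeg, hcard]
  have hedges : T.edgeFinset.card + 1 = n := by rw [hT.card_edgeFinset, hcard]
  have HS : degCnt T 1 + 2 * degCnt T 2 + 3 * degCnt T 3 + 4 * degCnt T 4 = 2 * n - 2 := by
    have h1 := deg_sum_eq T hdeg
    have h2 := T.sum_degrees_eq_twice_card_edges
    omega
  -- K expansion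
  have hKexp : Kn T = 78400 * dcnt T 1 2 + 66150 * dcnt T 1 3 + 56448 * dcnt T 1 4
      + 44100 * dcnt T 2 2 + 84672 * dcnt T 2 3 + 78400 * dcnt T 2 4
      + 44100 * dcnt T 3 3 + 86400 * dcnt T 3 4 + 44100 * dcnt T 4 4 := by
    rw [Kn_partition T hdeg, icc14]
    simp [Finset.sum_insert, Finset.mem_insert, Finset.mem_singleton, Finset.sum_singleton]
    norm_num
    rw [dcnt_symm T 2 1, dcnt_symm T 3 1, dcnt_symm T 3 2, dcnt_symm T 4 1,
      dcnt_symm T 4 2, dcnt_symm T 4 3, hd11]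
    simp only [Cw]
    norm_num
    try ring
  obtain ⟨hge, hiff⟩ := key_arith n (degCnt T 1) (degCnt T 2) (degCnt T 3) (degCnt T 4)
    (dcnt T 1 2) (dcnt T 1 3) (dcnt T 1 4) (dcnt T 2 2) (dcnt T 2 3) (dcnt T 2 4)
    (dcnt T 3 3) (dcnt T 3 4) (dcnt T 4 4) (Kn T) hn hmod R1 R2 R3 R4 H HS hKexp
  have hKHA : (Kn T : ℝ) = 88200 * HA T := Kn_eq_HA T hdeg
  have target_eq : (19 * (n : ℝ) - 31) / 25 + 8 / 225 = (67032 * (n : ℝ) - 106232) / 88200 := by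
    ring
  -- the neighbor condition
  have hcond : (∀ v w : V, T.degree v = 2 → T.Adj v w → T.degree w = 4)
      ↔ (dcnt T 2 1 = 0 ∧ dcnt T 2 2 = 0 ∧ dcnt T 2 3 = 0) := by
    constructor
    · intro h
      refine ⟨?_, ?_, ?_⟩ <;>
        · rw [dcnt, Finset.card_eq_zero, Finset.filter_eq_empty_iff]
          rintro d - ⟨h1, h2⟩
          have := h d.fst d.snd h1 d.adj
          omega
    · rintro ⟨h1, h2, h3⟩ v w hv hadj
      have hw4 := hdeg w
      have hcase : T.degree w = 1 ∨ T.degree w = 2 ∨ T.degree w = 3 ∨ T.degree w = 4 := by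
        omega
      have hmem : ∀ t : ℕ, T.degree w = t →
          (⟨(v, w), hadj⟩ : T.Dart) ∈ (Finset.univ.filter
            fun d : T.Dart => T.degree d.fst = 2 ∧ T.degree d.snd = t) := by
        intro t ht
        simp only [Finset.mem_filter, Finset.mem_univ, true_and]
        exact ⟨hv, ht⟩
      rcases hcase with h | h | h | h
      · exfalso
        have hc := hmem 1 h
        unfold dcnt at h1
        rw [Finset.card_eq_zero] at h1
        rw [h1] at hc
        exact absurd hc (Finset.notMem_empty _)
      · exfalso
        have hc := hmem 2 h
        unfold dcnt at h2
        rw [Finset.card_eq_zero] at h2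
        rw [h2] at hc
        exact absurd hc (Finset.notMem_empty _)
      · exfalso
        have hc := hmem 3 h
        unfold dcnt at h3
        rw [Finset.card_eq_zero] at h3
        rw [h3] at hc
        exact absurd hc (Finset.notMem_empty _)
      · exact h
  constructor
  · -- the inequality
    rw [ge_iff_le, target_eq, div_le_iff₀ (show (0:ℝ) < 88200 by norm_num)]
    have hc : (67032 : ℝ) * n ≤ (Kn T : ℝ) + 106232 := by exact_mod_cast hge
    linarith [hKHA]
  · -- the equality characterization
    have h1 : (HA T = (19 * (n : ℝ) - 31) / 25 + 8 / 225) ↔ (Kn T + 106232 = 67032 * n) := by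
      rw [target_eq, eq_div_iff (show (88200:ℝ) ≠ 0 by norm_num)]
      constructor
      · intro h
        have hr : (Kn T : ℝ) + 106232 = 67032 * (n : ℝ) := by linarith [hKHA]
        exact_mod_cast hr
      · intro h
        have hr : (Kn T : ℝ) + 106232 = 67032 * (n : ℝ) := by exact_mod_cast h
        linarith [hKHA]
    rw [h1, hiff, hcond]
    constructor
    · rintro ⟨h3, h2, hb12, hb22, hb23⟩
      exact ⟨h3, h2, by rw [dcnt_symm T 2 1]; exact hb12, hb22, hb23⟩
    · rintro ⟨h3, h2, c1, c2, c3⟩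
      exact ⟨h3, h2, by rw [← dcnt_symm T 2 1]; exact c1, c2, c3⟩
end

section
/- Let T be a molecular tree of order 10 with n_2 = 0, m_{3,3} = 0, and m_{1,3} ≤ 1. Then n_3 ≥ 1, m_{1,3} = 1, m_{3,4} = 2, and Γ_HA(T) = 927/4900. -/
open Finset
open scoped Classical

lemma edgeCnt_comm {V : Type*} [Fintype V] (G : SimpleGraph V) (s t : ℕ) :
    edgeCnt G s t = edgeCnt G t s := by
  unfold edgeCnt
  congr 1
  apply Finset.filter_congr
  intro e _
  induction e with
  | _ u v => simp only [Sym2.lift_mk]; tauto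

lemma edgeCnt_zero_left {V : Type*} [Fintype V] (G : SimpleGraph V) {s : ℕ} (t : ℕ)
    (h : degCnt G s = 0) : edgeCnt G s t = 0 := by
  have hs : ∀ v : V, G.degree v ≠ s := by
    intro v hv
    have : v ∈ Finset.univ.filter fun v => G.degree v = s := by simp [hv]
    rw [degCnt, Finset.card_eq_zero] at h
    simp [h] at this
  rw [edgeCnt, Finset.card_eq_zero, Finset.filter_eq_empty_iff]
  intro e _
  induction e with
  | _ u v =>
    simp only [Sym2.lift_mk]
    rintro (⟨h1, h2⟩ | ⟨h1, h2⟩)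
    · exact hs u h1
    · exact hs v h2

/-- A molecular tree of order `10` with `n_2 = 0`, `m_{3,3} = 0`, and `m_{1,3} ≤ 1`
satisfies `n_3 ≥ 1`, `m_{1,3} = 1`, `m_{3,4} = 2`, and `Γ_HA(T) = 927/4900`. -/
theorem order_ten_case {V : Type*} [Fintype V] (T : SimpleGraph V) (hT : T.IsTree)
    (hcard : Fintype.card V = 10) (hmol : ∀ v : V, T.degree v ≤ 4)
    (hn2 : degCnt T 2 = 0) (h33 : edgeCnt T 3 3 = 0) (h13 : edgeCnt T 1 3 ≤ 1) :
    1 ≤ degCnt T 3 ∧ edgeCnt T 1 3 = 1 ∧ edgeCnt T 3 4 = 2 ∧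
    (83 / 225 : ℝ) * edgeCnt T 1 2 + (3 / 20) * edgeCnt T 1 3 + (6 / 25) * edgeCnt T 2 2 +
      (3 / 25) * edgeCnt T 2 3 + (2 / 225) * edgeCnt T 2 4 + (2 / 25) * edgeCnt T 3 3 +
      (24 / 1225) * edgeCnt T 3 4 = 927 / 4900 := by
  classical
  have hconn := hT.isConnected
  have hdegpos : ∀ v : V, 1 ≤ T.degree v := by
    intro v
    obtain ⟨w, hw⟩ := Fintype.exists_ne_of_one_lt_card (by omega) v
    obtain ⟨p⟩ := hconn.preconnected v w
    have hnn : ¬ p.Nil := SimpleGraph.Walk.not_nil_of_ne (Ne.symm hw)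
    exact (SimpleGraph.degree_pos_iff_exists_adj T v).mpr ⟨_, p.adj_snd hnn⟩
  have hedge : T.edgeFinset.card = 9 := by
    have := hT.card_edgeFinset; omega
  have hdegsum : ∑ v : V, T.degree v = 18 := by
    rw [SimpleGraph.sum_degrees_eq_twice_card_edges, hedge]
  have hmem : ∀ v ∈ (Finset.univ : Finset V), T.degree v ∈ ({1,2,3,4} : Finset ℕ) := by
    intro v _
    have h1 := hdegpos v; have h2 := hmol v
    simp only [Finset.mem_insert, Finset.mem_singleton]
    omega
  have hcard' : (10 : ℕ) = degCnt T 1 + degCnt T 2 + degCnt T 3 + degCnt T 4 := by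
    have := Finset.card_eq_sum_card_fiberwise hmem
    rw [Finset.card_univ, hcard] at this
    rw [this, Finset.sum_insert (by norm_num), Finset.sum_insert (by norm_num),
      Finset.sum_insert (by norm_num), Finset.sum_singleton]
    unfold degCnt; ring
  have hsum' : degCnt T 1 + 2 * degCnt T 2 + 3 * degCnt T 3 + 4 * degCnt T 4 = 18 := by
    have h1 : ∑ t ∈ ({1,2,3,4} : Finset ℕ), ∑ v ∈ Finset.univ.filter (fun v => T.degree v = t),
        T.degree v = ∑ v : V, T.degree v := Finset.sum_fiberwise_of_maps_to hmem _
    have h2 : ∀ t : ℕ, ∑ v ∈ Finset.univ.filter (fun v => T.degree v = t), T.degree v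
        = t * degCnt T t := by
      intro t
      rw [degCnt, Finset.sum_congr rfl (fun v hv => (Finset.mem_filter.mp hv).2),
        Finset.sum_const, smul_eq_mul, mul_comm]
    rw [hdegsum] at h1
    rw [Finset.sum_insert (by norm_num), Finset.sum_insert (by norm_num),
      Finset.sum_insert (by norm_num), Finset.sum_singleton, h2, h2, h2, h2] at h1
    omega
  -- no degree-2 vertices
  have hnd2 : ∀ w : V, T.degree w ≠ 2 := by
    intro w hw
    have : w ∈ Finset.univ.filter fun u => T.degree u = 2 := by simp [hw]
    rw [degCnt, Finset.card_eq_zero] at hn2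
    simp [hn2] at this
  -- no 3-3 adjacency
  have hadj33 : ∀ a b : V, T.Adj a b → T.degree a = 3 → T.degree b = 3 → False := by
    intro a b hab ha hb
    have h33' := h33
    rw [edgeCnt, Finset.card_eq_zero, Finset.filter_eq_empty_iff] at h33'
    exact h33' (SimpleGraph.mem_edgeFinset.mpr ((T.mem_edgeSet).mpr hab))
      (by simp only [Sym2.lift_mk]; exact Or.inl ⟨ha, hb⟩)
  have hn34 : 2 * degCnt T 3 + 3 * degCnt T 4 = 8 := by omega
  have hn3pos : 0 < degCnt T 3 := by omega
  obtain ⟨v, hv⟩ := Finset.card_pos.mp hn3pos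
  have hv3 : T.degree v = 3 := (Finset.mem_filter.mp hv).2
  set N := T.neighborFinset v with hN
  have hNcard : N.card = 3 := by rw [hN, T.card_neighborFinset_eq_degree, hv3]
  have hNdeg : ∀ w ∈ N, T.degree w = 1 ∨ T.degree w = 4 := by
    intro w hw
    have hadj : T.Adj v w := (SimpleGraph.mem_neighborFinset T v w).mp hw
    have h1 := hdegpos w
    have h2 := hmol w
    have h3 := hnd2 w
    have h4 : T.degree w ≠ 3 := fun hc => hadj33 v w hadj hv3 hc
    omega
  set A := N.filter (fun w => T.degree w = 1) with hA
  set B := N.filter (fun w => T.degree w = 4) with hB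
  have hAB : A.card + B.card = 3 := by
    have hdisj : Disjoint A B := by
      rw [Finset.disjoint_left]
      intro w hwA hwB
      rw [hA, Finset.mem_filter] at hwA
      rw [hB, Finset.mem_filter] at hwB
      omega
    rw [← Finset.card_union_of_disjoint hdisj, ← hNcard]
    congr 1
    ext w
    simp only [Finset.mem_union, hA, hB, Finset.mem_filter]
    constructor
    · rintro (⟨h, _⟩ | ⟨h, _⟩) <;> exact h
    · intro hw
      rcases hNdeg w hw with h | h
      · exact Or.inl ⟨hw, h⟩
      · exact Or.inr ⟨hw, h⟩
  have hA_le : A.card ≤ edgeCnt T 1 3 := by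
    rw [edgeCnt]
    apply Finset.card_le_card_of_injOn (fun w => s(v, w))
    · intro w hw
      rw [Finset.mem_coe, hA, Finset.mem_filter] at hw
      obtain ⟨hwN, hw1⟩ := hw
      have hadj : T.Adj v w := (SimpleGraph.mem_neighborFinset T v w).mp hwN
      rw [Finset.mem_coe, Finset.mem_filter]
      refine ⟨SimpleGraph.mem_edgeFinset.mpr ((T.mem_edgeSet).mpr hadj), ?_⟩
      simp only [Sym2.lift_mk]
      exact Or.inr ⟨hv3, hw1⟩
    · intro a _ b _ h
      exact Sym2.congr_right.mp h
  have hB_le : B.card ≤ degCnt T 4 := by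
    rw [degCnt]
    exact Finset.card_le_card (fun w hw => by
      rw [hB, Finset.mem_filter] at hw
      simp [hw.2])
  have hn3 : degCnt T 3 = 1 := by omega
  have hn4 : degCnt T 4 = 2 := by omega
  have hAcard : A.card = 1 := by omega
  have hBcard : B.card = 2 := by omega
  -- uniqueness of the degree-3 vertex
  have huniq : ∀ w : V, T.degree w = 3 → w = v := by
    intro w hw
    have hw' : w ∈ Finset.univ.filter fun u => T.degree u = 3 := by simp [hw]
    exact Finset.card_le_one.mp (le_of_eq hn3) w hw' v hv
  have h13eq : edgeCnt T 1 3 = 1 := by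
    rw [edgeCnt]
    have himg : (T.edgeFinset.filter fun e =>
        Sym2.lift ⟨fun u w => (T.degree u = 1 ∧ T.degree w = 3) ∨
          (T.degree u = 3 ∧ T.degree w = 1), fun u w => propext (by tauto)⟩ e)
        = A.image (fun w => s(v, w)) := by
      ext e
      induction e with
      | _ a b =>
        simp only [Finset.mem_filter, Finset.mem_image, Sym2.lift_mk,
          SimpleGraph.mem_edgeFinset, SimpleGraph.mem_edgeSet]
        constructor
        · rintro ⟨hab, (⟨h1, h2⟩ | ⟨h1, h2⟩)⟩
          · have hbv := huniq b h2
            subst hbv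
            refine ⟨a, ?_, Sym2.eq_swap⟩
            rw [hA, Finset.mem_filter, hN, SimpleGraph.mem_neighborFinset]
            exact ⟨hab.symm, h1⟩
          · have hav := huniq a h1
            subst hav
            refine ⟨b, ?_, rfl⟩
            rw [hA, Finset.mem_filter, hN, SimpleGraph.mem_neighborFinset]
            exact ⟨hab, h2⟩
        · rintro ⟨w, hw, hwe⟩
          rw [hA, Finset.mem_filter, hN, SimpleGraph.mem_neighborFinset] at hw
          rcases Sym2.eq_iff.mp hwe with ⟨hva, hwb⟩ | ⟨hvb, hwa⟩
          · subst hva; subst hwb; exact ⟨hw.1, Or.inr ⟨hv3, hw.2⟩⟩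
          · subst hvb; subst hwa; exact ⟨hw.1.symm, Or.inl ⟨hw.2, hv3⟩⟩
    rw [himg, Finset.card_image_of_injOn (fun a _ b _ h => Sym2.congr_right.mp h), hAcard]
  have h34eq : edgeCnt T 3 4 = 2 := by
    rw [edgeCnt]
    have himg : (T.edgeFinset.filter fun e =>
        Sym2.lift ⟨fun u w => (T.degree u = 3 ∧ T.degree w = 4) ∨
          (T.degree u = 4 ∧ T.degree w = 3), fun u w => propext (by tauto)⟩ e)
        = B.image (fun w => s(v, w)) := by
      ext e
      induction e with
      | _ a b =>
        simp only [Finset.mem_filter, Finset.mem_image, Sym2.lift_mk,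
          SimpleGraph.mem_edgeFinset, SimpleGraph.mem_edgeSet]
        constructor
        · rintro ⟨hab, (⟨h1, h2⟩ | ⟨h1, h2⟩)⟩
          · have hav := huniq a h1
            subst hav
            refine ⟨b, ?_, rfl⟩
            rw [hB, Finset.mem_filter, hN, SimpleGraph.mem_neighborFinset]
            exact ⟨hab, h2⟩
          · have hbv := huniq b h2
            subst hbv
            refine ⟨a, ?_, Sym2.eq_swap⟩
            rw [hB, Finset.mem_filter, hN, SimpleGraph.mem_neighborFinset]
            exact ⟨hab.symm, h1⟩
        · rintro ⟨w, hw, hwe⟩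
          rw [hB, Finset.mem_filter, hN, SimpleGraph.mem_neighborFinset] at hw
          rcases Sym2.eq_iff.mp hwe with ⟨hva, hwb⟩ | ⟨hvb, hwa⟩
          · subst hva; subst hwb; exact ⟨hw.1, Or.inl ⟨hv3, hw.2⟩⟩
          · subst hvb; subst hwa; exact ⟨hw.1.symm, Or.inr ⟨hw.2, hv3⟩⟩
    rw [himg, Finset.card_image_of_injOn (fun a _ b _ h => Sym2.congr_right.mp h)]
    omega
  have z12 : edgeCnt T 1 2 = 0 := by rw [edgeCnt_comm]; exact edgeCnt_zero_left T 1 hn2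
  have z22 : edgeCnt T 2 2 = 0 := edgeCnt_zero_left T 2 hn2
  have z23 : edgeCnt T 2 3 = 0 := edgeCnt_zero_left T 3 hn2
  have z24 : edgeCnt T 2 4 = 0 := edgeCnt_zero_left T 4 hn2
  refine ⟨by omega, h13eq, h34eq, ?_⟩
  rw [z12, h13eq, z22, z23, z24, h33, h34eq]
  norm_num
end
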